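/- arXiv:2309.04691 — 5 statements merged into one kernel-verified Lean document; each statement's English description precedes it below -/
import Mathlib

section
/- For every integer k ≥ 2 and every δ ∈ (0, 1/10], if X is a binomial random variable with parameters k and 1/2 + δ/2, then P(X > k/2) + P(X = k/2)·(1/2 + δ) ≥ 1/2 + (51/100)δ. -/
open Finset

/-- Upper tail of a binomial: `P(Bin(n,p) ≥ r)`. -/
noncomputable def tl (n r : ℕ) (p : ℝ) : ℝ :=
  ∑ i ∈ Finset.Icc r n, (n.choose i : ℝ) * p ^ i * (1 - p) ^ (n - i)

lemma tl_split (n r : ℕ) (h : r ≤ n) (p : ℝ) :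
    tl n r p = (n.choose r : ℝ) * p ^ r * (1 - p) ^ (n - r) + tl n (r + 1) p := by
  unfold tl
  rw [Finset.Icc_eq_cons_Ioc h, Finset.sum_cons, Finset.Icc_add_one_left_eq_Ioc]

lemma tl_succ (n r : ℕ) (p : ℝ) :
    tl (n + 1) (r + 1) p = p * tl n r p + (1 - p) * tl n (r + 1) p := by
  by_cases h : r ≤ n
  · unfold tl
    have hmap : Finset.Icc (r + 1) (n + 1)
        = (Finset.Icc r n).map ⟨fun j => j + 1, add_left_injective 1⟩ := by
      ext x
      simp only [Finset.mem_Icc, Finset.mem_map, Function.Embedding.coeFn_mk]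
      constructor
      · rintro ⟨h1, h2⟩; exact ⟨x - 1, ⟨by omega, by omega⟩, by show x - 1 + 1 = x; omega⟩
      · rintro ⟨j, hj, rfl⟩; show r + 1 ≤ j + 1 ∧ j + 1 ≤ n + 1; omega
    have hz : ∑ i ∈ Finset.Icc (r + 1) n, (n.choose i : ℝ) * p ^ i * (1 - p) ^ (n - i)
        = ∑ j ∈ Finset.Icc r n, (n.choose (j + 1) : ℝ) * p ^ (j + 1) * (1 - p) ^ (n - (j + 1)) := by
      have htop : ∑ i ∈ Finset.Icc (r + 1) (n + 1), (n.choose i : ℝ) * p ^ i * (1 - p) ^ (n - i)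
          = (∑ i ∈ Finset.Icc (r + 1) n, (n.choose i : ℝ) * p ^ i * (1 - p) ^ (n - i))
            + (n.choose (n + 1) : ℝ) * p ^ (n + 1) * (1 - p) ^ (n - (n + 1)) :=
        Finset.sum_Icc_succ_top (by omega) _
      rw [Nat.choose_succ_self] at htop
      push_cast at htop
      rw [hmap, Finset.sum_map] at htop
      simp only [Function.Embedding.coeFn_mk] at htop
      linarith [htop]
    rw [hmap, Finset.sum_map]
    simp only [Function.Embedding.coeFn_mk]
    rw [hz, Finset.mul_sum, Finset.mul_sum, ← Finset.sum_add_distrib]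
    apply Finset.sum_congr rfl
    intro j hj
    simp only [Finset.mem_Icc] at hj
    rcases eq_or_lt_of_le hj.2 with he | hlt
    · subst he
      rw [Nat.choose_succ_self]
      simp only [Nat.choose_self, Nat.succ_sub_succ_eq_sub, Nat.sub_self]
      push_cast
      ring
    · have h1 : n + 1 - (j + 1) = n - j := by omega
      have h2 : n - j = (n - (j + 1)) + 1 := by omega
      rw [h1, h2, Nat.choose_succ_succ]
      push_cast
      ring
  · have h1 : Finset.Icc (r + 1) (n + 1) = ∅ := Finset.Icc_eq_empty (by omega)
    have h2 : Finset.Icc r n = ∅ := Finset.Icc_eq_empty (by omega)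
    have h3 : Finset.Icc (r + 1) n = ∅ := Finset.Icc_eq_empty (by omega)
    simp [tl, h1, h2, h3]

lemma tl_odd_eq (m : ℕ) (p : ℝ) :
    tl (2 * m + 1) (m + 1) p
      = tl (2 * m) (m + 1) p + p * (((2 * m).choose m : ℝ) * p ^ m * (1 - p) ^ m) := by
  have h := tl_succ (2 * m) m p
  have h2 := tl_split (2 * m) m (by omega) p
  rw [show 2 * m - m = m from by omega] at h2
  rw [h, h2]
  ring

lemma F_step (m : ℕ) (p : ℝ) (hq : 0 ≤ 1 - p) (hpq : 1 - p ≤ p) :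
    tl (2 * m + 1) (m + 1) p ≤ tl (2 * m + 3) (m + 2) p := by
  have e1 := tl_succ (2 * m + 2) (m + 1) p
  rw [show 2 * m + 2 + 1 = 2 * m + 3 from by omega] at e1
  have e2 := tl_succ (2 * m + 1) m p
  rw [show 2 * m + 1 + 1 = 2 * m + 2 from by omega] at e2
  have e3 := tl_succ (2 * m + 1) (m + 1) p
  rw [show 2 * m + 1 + 1 = 2 * m + 2 from by omega] at e3
  have s1 := tl_split (2 * m + 1) m (by omega) p
  rw [show 2 * m + 1 - m = m + 1 from by omega] at s1
  have s2 := tl_split (2 * m + 1) (m + 1) (by omega) p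
  rw [show 2 * m + 1 - (m + 1) = m from by omega] at s2
  have hcn : (2 * m + 1).choose (m + 1) = (2 * m + 1).choose m := by
    rw [← Nat.choose_symm (show m + 1 ≤ 2 * m + 1 by omega)]
    congr 1
    omega
  rw [hcn] at s2
  have key : tl (2 * m + 3) (m + 2) p
      = tl (2 * m + 1) (m + 1) p
        + ((2 * m + 1).choose m : ℝ) * p ^ (m + 1) * (1 - p) ^ (m + 1) * (2 * p - 1) := by
    rw [e1, e2, e3, s1, s2]
    ring
  have hp0 : 0 ≤ p := le_trans hq hpq
  have hnn : 0 ≤ ((2 * m + 1).choose m : ℝ) * p ^ (m + 1) * (1 - p) ^ (m + 1) * (2 * p - 1) := by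
    apply mul_nonneg
    apply mul_nonneg
    apply mul_nonneg (Nat.cast_nonneg _) (pow_nonneg hp0 _)
    exact pow_nonneg hq _
    linarith
  linarith [key, hnn]

lemma F_ge (m : ℕ) (hm : 1 ≤ m) (p : ℝ) (hq : 0 ≤ 1 - p) (hpq : 1 - p ≤ p) :
    tl 3 2 p ≤ tl (2 * m + 1) (m + 1) p := by
  induction m, hm using Nat.le_induction with
  | base => norm_num
  | succ n hn ih =>
    have hstep := F_step n p hq hpq
    rw [show 2 * (n + 1) + 1 = 2 * n + 3 from by ring, show n + 1 + 1 = n + 2 from rfl]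
    linarith

lemma even_ge (m : ℕ) (hm : 1 ≤ m) (p r : ℝ) (hq : 0 ≤ 1 - p) (hpq : 1 - p ≤ p)
    (hr : p ≤ r) :
    tl 3 2 p ≤ tl (2 * m) (m + 1) p + ((2 * m).choose m : ℝ) * p ^ m * (1 - p) ^ m * r := by
  have hp0 : 0 ≤ p := le_trans hq hpq
  have hC : (0:ℝ) ≤ ((2 * m).choose m : ℝ) * p ^ m * (1 - p) ^ m :=
    mul_nonneg (mul_nonneg (Nat.cast_nonneg _) (pow_nonneg hp0 _)) (pow_nonneg hq _)
  have h1 : ((2 * m).choose m : ℝ) * p ^ m * (1 - p) ^ m * p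
      ≤ ((2 * m).choose m : ℝ) * p ^ m * (1 - p) ^ m * r :=
    mul_le_mul_of_nonneg_left hr hC
  have h2 := tl_odd_eq m p
  have h3 := F_ge m hm p hq hpq
  linarith

lemma tl32 (p : ℝ) : tl 3 2 p = 3 * p ^ 2 * (1 - p) + p ^ 3 := by
  have h := tl_split 3 2 (by omega) p
  have h2 : tl 3 3 p = p ^ 3 := by
    unfold tl
    rw [Finset.Icc_self, Finset.sum_singleton]
    norm_num
  rw [h, h2]
  norm_num

/-- For every integer `k ≥ 2` and `δ ∈ (0, 1/10]`, if `X ~ Bin(k, 1/2 + δ/2)` then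
`P(X > k/2) + P(X = k/2)·(1/2 + δ) ≥ 1/2 + (51/100)δ`. -/
theorem stmt0 (k : ℕ) (hk : 2 ≤ k) (δ : ℝ) (hδ0 : 0 < δ) (hδ1 : δ ≤ 1/10) :
    (∑ i ∈ Finset.range (k+1),
        if k < 2*i then (k.choose i : ℝ) * (1/2 + δ/2)^i * (1/2 - δ/2)^(k-i) else 0)
      + (∑ i ∈ Finset.range (k+1),
        if 2*i = k then (k.choose i : ℝ) * (1/2 + δ/2)^i * (1/2 - δ/2)^(k-i) else 0)
        * (1/2 + δ)
      ≥ 1/2 + (51/100) * δ := by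
  have hb : (1:ℝ)/2 - δ/2 = 1 - (1/2 + δ/2) := by ring
  simp only [hb]
  set p : ℝ := 1/2 + δ/2 with hp
  have hq0 : 0 ≤ 1 - p := by rw [hp]; linarith
  have hpq : 1 - p ≤ p := by rw [hp]; linarith
  have hp0 : 0 ≤ p := le_trans hq0 hpq
  have hbase : 1/2 + 51/100 * δ ≤ tl 3 2 p := by
    rw [tl32, hp]
    nlinarith [hδ0.le, hδ1, sq_nonneg δ, mul_nonneg hδ0.le hδ0.le]
  have hset1 : (Finset.range (k+1)).filter (fun i => k < 2*i) = Finset.Icc (k/2 + 1) k := by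
    ext i
    simp only [Finset.mem_filter, Finset.mem_range, Finset.mem_Icc]
    omega
  have hA : (∑ i ∈ Finset.range (k+1),
      if k < 2*i then (k.choose i : ℝ) * p^i * (1 - p)^(k-i) else 0)
      = tl k (k/2 + 1) p := by
    rw [← Finset.sum_filter, hset1]
    rfl
  rw [hA]
  rcases Nat.even_or_odd k with hk2 | hk2
  · obtain ⟨m, hm⟩ := hk2
    have hm' : k = 2 * m := by omega
    subst hm'
    have hmm : 1 ≤ m := by omega
    have hdiv : 2 * m / 2 = m := by omega
    rw [hdiv]
    have hsetT : (Finset.range (2*m+1)).filter (fun i => 2*i = 2*m) = {m} := by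
      ext i
      simp only [Finset.mem_filter, Finset.mem_range, Finset.mem_singleton]
      omega
    have hT : (∑ i ∈ Finset.range (2*m+1),
        if 2*i = 2*m then ((2*m).choose i : ℝ) * p^i * (1 - p)^(2*m-i) else 0)
        = ((2*m).choose m : ℝ) * p^m * (1 - p)^m := by
      rw [← Finset.sum_filter, hsetT, Finset.sum_singleton,
        show 2*m - m = m from by omega]
    rw [hT]
    have hple : p ≤ 1/2 + δ := by rw [hp]; linarith
    have h4 := even_ge m hmm p (1/2 + δ) hq0 hpq hple
    linarith
  · obtain ⟨m, hm⟩ := hk2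
    subst hm
    have hmm : 1 ≤ m := by omega
    have hdiv : (2 * m + 1) / 2 = m := by omega
    rw [hdiv]
    have hsetT : (Finset.range (2*m+1+1)).filter (fun i => 2*i = 2*m+1) = ∅ := by
      ext i
      simp only [Finset.mem_filter, Finset.mem_range, Finset.notMem_empty, iff_false,
        not_and]
      omega
    have hT : (∑ i ∈ Finset.range (2*m+1+1),
        if 2*i = 2*m+1 then ((2*m+1).choose i : ℝ) * p^i * (1 - p)^(2*m+1-i) else 0)
        = 0 := by
      rw [← Finset.sum_filter, hsetT, Finset.sum_empty]
    rw [hT]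
    have h3 := F_ge m hmm p hq0 hpq
    linarith
end

section
/- For every constant p ∈ (0, 1], the infinite product ∏_{i=1}^∞ (1 − (1−p)^i) is at least p^{1/p}. -/
open Real

/-- For every `p ∈ (0,1]`, `∏_{i=1}^∞ (1 − (1−p)^i) ≥ p^{1/p}`. -/
theorem stmt1 (p : ℝ) (hp0 : 0 < p) (hp1 : p ≤ 1) :
    p ^ ((1:ℝ)/p) ≤ ∏' i : ℕ, (1 - (1 - p) ^ (i + 1)) := by
  set q : ℝ := 1 - p with hq
  have hq0 : 0 ≤ q := by simp [hq]; linarith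
  have hq1 : q < 1 := by simp [hq]; linarith
  -- geometric sum
  have hgeo : HasSum (fun i : ℕ => q ^ i) (1 - q)⁻¹ :=
    hasSum_geometric_of_lt_one hq0 hq1
  have hsum : HasSum (fun i : ℕ => q ^ i * Real.log p) ((1 - q)⁻¹ * Real.log p) :=
    hgeo.mul_right _
  -- the lower-bound product
  have hprod : HasProd (fun i : ℕ => Real.exp (q ^ i * Real.log p))
      (Real.exp ((1 - q)⁻¹ * Real.log p)) := hsum.rexp
  -- pointwise inequality
  have hpt : ∀ i : ℕ, Real.exp (q ^ i * Real.log p) ≤ 1 - q ^ (i + 1) := by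
    intro i
    have ht0 : (0:ℝ) ≤ q ^ i := pow_nonneg hq0 i
    have ht1 : q ^ i ≤ 1 := pow_le_one₀ hq0 hq1.le
    have := convexOn_exp.2 (Set.mem_univ (0:ℝ)) (Set.mem_univ (Real.log p))
      (by linarith : (0:ℝ) ≤ 1 - q ^ i) ht0 (by ring)
    simp only [smul_eq_mul, mul_zero, zero_add, Real.exp_zero, mul_one,
      Real.exp_log hp0] at this
    calc Real.exp (q ^ i * Real.log p) ≤ (1 - q ^ i) + q ^ i * p := this
      _ = 1 - q ^ (i + 1) := by rw [pow_succ]; ring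
  have hgpos : ∀ i : ℕ, 0 < 1 - q ^ (i + 1) := by
    intro i
    have : q ^ (i + 1) < 1 := pow_lt_one₀ hq0 hq1 (Nat.succ_ne_zero i)
    linarith
  -- multipliability of the target product
  have hlogsum : Summable (fun i : ℕ => -Real.log (1 - q ^ (i + 1))) := by
    apply Summable.of_nonneg_of_le (fun i => ?_) (fun i => ?_)
      (hsum.summable.neg)
    · rw [neg_nonneg]
      exact Real.log_nonpos (by linarith [hgpos i]) (by nlinarith [pow_nonneg hq0 (i+1)])
    · rw [neg_le_neg_iff]
      calc q ^ i * Real.log p = Real.log (Real.exp (q ^ i * Real.log p)) :=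
            (Real.log_exp _).symm
        _ ≤ Real.log (1 - q ^ (i + 1)) :=
            Real.log_le_log (Real.exp_pos _) (hpt i)
  have hmul : Multipliable (fun i : ℕ => 1 - q ^ (i + 1)) := by
    have h := (hlogsum.neg.hasSum).rexp
    have heq : (rexp ∘ fun b : ℕ => - -Real.log (1 - q ^ (b + 1)))
        = fun i : ℕ => 1 - q ^ (i + 1) := by
      funext i
      simp [Real.exp_log (hgpos i)]
    rw [heq] at h
    exact ⟨_, h⟩
  have hlogp : Real.log p ≤ 0 := Real.log_nonpos hp0.le hp1
  have key : ∀ s : Finset ℕ,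
      Real.exp ((1 - q)⁻¹ * Real.log p) ≤ ∏ i ∈ s, (1 - q ^ (i + 1)) := by
    intro s
    have h1 : (1 - q)⁻¹ * Real.log p ≤ ∑ i ∈ s, q ^ i * Real.log p := by
      have hneg : ∀ i ∉ s, 0 ≤ -(q ^ i * Real.log p) := fun i _ => by
        have := pow_nonneg hq0 i
        nlinarith
      have h2 := Summable.sum_le_tsum s hneg hsum.summable.neg
      rw [hsum.neg.tsum_eq] at h2
      simp only [Finset.sum_neg_distrib] at h2
      linarith
    calc Real.exp ((1 - q)⁻¹ * Real.log p)
        ≤ Real.exp (∑ i ∈ s, q ^ i * Real.log p) := Real.exp_le_exp.2 h1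
      _ = ∏ i ∈ s, Real.exp (q ^ i * Real.log p) := Real.exp_sum _ _
      _ ≤ ∏ i ∈ s, (1 - q ^ (i + 1)) :=
          Finset.prod_le_prod (fun i _ => (Real.exp_pos _).le) (fun i _ => hpt i)
  have key2 : Real.exp ((1 - q)⁻¹ * Real.log p) ≤ ∏' i : ℕ, (1 - q ^ (i + 1)) :=
    le_hasProd_of_le_prod hmul.hasProd key
  calc p ^ ((1:ℝ)/p) = Real.exp (Real.log p * (1/p)) := Real.rpow_def_of_pos hp0 _
    _ = Real.exp ((1 - q)⁻¹ * Real.log p) := by rw [hq]; ring_nf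
    _ ≤ _ := key2
end

section
/- For every δ ∈ (0, 1/10], (9/10)·(1+δ)/(1−δ) + (1/10)·((1+δ)/(1−δ))³ ≥ (1/2 + 51δ/100)/(1/2 − 51δ/100). -/
/-- For every `δ ∈ (0, 1/10]`,
`(9/10)·(1+δ)/(1−δ) + (1/10)·((1+δ)/(1−δ))³ ≥ (1/2 + 51δ/100)/(1/2 − 51δ/100)`. -/
theorem stmt9 (δ : ℝ) (h0 : 0 < δ) (h1 : δ ≤ 1/10) :
    (9/10) * ((1 + δ)/(1 - δ)) + (1/10) * ((1 + δ)/(1 - δ))^3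
      ≥ (1/2 + 51*δ/100)/(1/2 - 51*δ/100) := by
  have hd : (0:ℝ) < 1 - δ := by linarith
  have hd2 : (0:ℝ) < 1/2 - 51*δ/100 := by linarith
  rw [ge_iff_le, div_le_iff₀ hd2, div_pow]
  have h3 : (0:ℝ) < (1 - δ)^3 := by positivity
  rw [show (9:ℝ)/10 * ((1 + δ)/(1 - δ)) + 1/10 * ((1 + δ)^3/(1 - δ)^3)
      = (9/10 * (1 + δ) * (1 - δ)^2 + 1/10 * (1 + δ)^3) / (1 - δ)^3 by
    field_simp]
  rw [div_mul_eq_mul_div, le_div_iff₀ h3]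
  nlinarith [sq_nonneg δ, sq_nonneg (1-δ), mul_pos h0 h0, pow_pos h0 3, pow_pos h0 4]
end

section
/- Let ω = ω(n) → ∞ with ω = o(log log n), and suppose (log n + ω)/n ≤ p ≤ ω log n / n. Call a vertex of G(n,p) small if its degree is at most 5 log n/(log log n)^{1/2}. Then asymptotically almost surely, every two small vertices of G(n,p) are at graph distance at least 3 from each other. -/
open Filter MeasureTheory Set
open scoped ENNReal

namespace Stmt16Aux
set_option linter.unusedSectionVars false
set_option maxHeartbeats 2000000

noncomputable def W (P : ℝ≥0∞) : Bool → ℝ≥0∞ := fun b => bif b then P else 1 - P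
noncomputable def nu (P : ℝ≥0∞) (hP : P ≤ 1) : Measure Bool := (PMF.bernoulli P.toNNReal
  ((ENNReal.toNNReal_mono ENNReal.one_ne_top hP).trans_eq ENNReal.toNNReal_one)).toMeasure

lemma nu_singleton (P : ℝ≥0∞) (hP : P ≤ 1) (b : Bool) : nu P hP {b} = W P b := by
  rw [nu, PMF.toMeasure_apply_singleton _ _ (measurableSet_singleton b), PMF.bernoulli_apply]
  cases b <;> simp [W, ENNReal.coe_sub, ENNReal.coe_toNNReal (ne_top_of_le_ne_top ENNReal.one_ne_top hP)]

noncomputable def mu (κ : Type*) [Fintype κ] (P : ℝ≥0∞) (hP : P ≤ 1) : Measure (κ → Bool) :=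
  Measure.pi fun _ : κ => nu P hP

instance (P : ℝ≥0∞) (hP : P ≤ 1) : IsProbabilityMeasure (nu P hP) := by unfold nu; infer_instance
instance (κ : Type*) [Fintype κ] (P : ℝ≥0∞) (hP : P ≤ 1) :
    IsProbabilityMeasure (mu κ P hP) := by unfold mu; infer_instance

section Core
variable {κ β : Type*} [Fintype κ] [DecidableEq κ] [DecidableEq β]

lemma meas_singleton (f : κ → Bool) : MeasurableSet {f} := by
  have : {f} = ⋂ e : κ, (fun g : κ → Bool => g e) ⁻¹' {f e} := by ext g; simp [funext_iff]
  rw [this]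
  exact MeasurableSet.iInter fun e => measurable_pi_apply e (measurableSet_singleton _)

lemma meas_all (X : Set (κ → Bool)) : MeasurableSet X := by
  have : X = ⋃ f ∈ X, {f} := by simp
  rw [this]
  exact MeasurableSet.biUnion (Set.to_countable X) fun f _ => meas_singleton f

lemma mu_singleton (P : ℝ≥0∞) (hP : P ≤ 1) (f : κ → Bool) :
    mu κ P hP {f} = ∏ e, W P (f e) := by
  have h1 : ({f} : Set (κ → Bool)) = Set.pi Set.univ (fun e => {f e}) := by
    ext g; simp [funext_iff, Set.mem_pi]
  rw [h1, mu, Measure.pi_pi]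
  exact Finset.prod_congr rfl fun e _ => nu_singleton P hP (f e)

lemma mu_eq_sum (P : ℝ≥0∞) (hP : P ≤ 1) (X : Set (κ → Bool)) [DecidablePred (· ∈ X)] :
    mu κ P hP X = ∑ f : κ → Bool, if f ∈ X then ∏ e, W P (f e) else 0 := by
  have h1 : X = ⋃ f ∈ X.toFinset, ({f} : Set (κ → Bool)) := by simp
  have h2 : mu κ P hP X = ∑ f ∈ X.toFinset, mu κ P hP {f} := by
    conv_lhs => rw [h1]
    refine measure_biUnion_finset ?_ (fun f _ => meas_singleton f)
    intro a _ b _ hab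
    simp [Function.onFun, Set.disjoint_singleton, hab]
  have h3 : X.toFinset = Finset.univ.filter (· ∈ X) := by ext f; simp
  rw [h2, h3, Finset.sum_filter]
  exact Finset.sum_congr rfl fun f _ => by split <;> simp [mu_singleton P hP]

lemma mu_split (P : ℝ≥0∞) (hP : P ≤ 1) (J : Finset κ) (A B : Set (κ → Bool))
    (hA : ∀ f g : κ → Bool, (∀ e ∈ J, f e = g e) → f ∈ A → g ∈ A)
    (hB : ∀ f g : κ → Bool, (∀ e ∉ J, f e = g e) → f ∈ B → g ∈ B) :
    mu κ P hP (A ∩ B) = mu κ P hP A * mu κ P hP B := by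
  classical
  set EJ := Equiv.piEquivPiSubtypeProd (fun e : κ => e ∈ J) (fun _ => Bool) with hEJ
  set m : ({e : κ // e ∈ J} → Bool) → ({e : κ // ¬ e ∈ J} → Bool) → (κ → Bool) :=
    fun g h => EJ.symm (g, h) with hm
  have hmJ : ∀ g h e (he : e ∈ J), m g h e = g ⟨e, he⟩ := by
    intro g h e he; simp [hm, hEJ, Equiv.piEquivPiSubtypeProd_symm_apply, he]
  have hmN : ∀ g h e (he : ¬ e ∈ J), m g h e = h ⟨e, he⟩ := by
    intro g h e he; simp [hm, hEJ, Equiv.piEquivPiSubtypeProd_symm_apply, he]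
  have hAm : ∀ g h h', m g h ∈ A ↔ m g h' ∈ A := by
    intro g h h'
    constructor <;> refine fun hx => hA _ _ (fun e he => ?_) hx <;>
      rw [hmJ _ _ _ he, hmJ _ _ _ he]
  have hBm : ∀ g g' h, m g h ∈ B ↔ m g' h ∈ B := by
    intro g g' h
    constructor <;> refine fun hx => hB _ _ (fun e he => ?_) hx <;>
      rw [hmN _ _ _ he, hmN _ _ _ he]
  set g₀ : {e : κ // e ∈ J} → Bool := fun _ => false
  set h₀ : {e : κ // ¬ e ∈ J} → Bool := fun _ => false
  have hw : ∀ g h, (∏ e, W P (m g h e)) =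
      (∏ e ∈ J, W P (m g h₀ e)) * ∏ e ∈ Jᶜ, W P (m g₀ h e) := by
    intro g h
    rw [← Finset.prod_mul_prod_compl J (fun e => W P (m g h e))]
    congr 1
    · exact Finset.prod_congr rfl fun e he => by rw [hmJ _ _ _ he, hmJ _ _ _ he]
    · exact Finset.prod_congr rfl fun e he => by
        rw [hmN _ _ _ (Finset.mem_compl.mp he), hmN _ _ _ (Finset.mem_compl.mp he)]
  have key : ∀ (A' B' : Set (κ → Bool)),
      (∀ g h h', m g h ∈ A' ↔ m g h' ∈ A') →
      (∀ g g' h, m g h ∈ B' ↔ m g' h ∈ B') →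
      mu κ P hP (A' ∩ B') =
        (∑ g, if m g h₀ ∈ A' then ∏ e ∈ J, W P (m g h₀ e) else 0) *
        (∑ h, if m g₀ h ∈ B' then ∏ e ∈ Jᶜ, W P (m g₀ h e) else 0) := by
    intro A' B' hA' hB'
    rw [mu_eq_sum P hP, ← Equiv.sum_comp EJ.symm, Fintype.sum_prod_type, Finset.sum_mul_sum]
    refine Finset.sum_congr rfl fun g _ => Finset.sum_congr rfl fun h _ => ?_
    have h1 : EJ.symm (g, h) = m g h := rfl
    rw [h1, hw g h]
    by_cases hga : m g h ∈ A' <;> by_cases hgb : m g h ∈ B'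
    · rw [if_pos ⟨hga, hgb⟩, if_pos ((hA' g h h₀).mp hga), if_pos ((hB' g g₀ h).mp hgb)]
    · rw [if_neg (fun hc => hgb hc.2), if_neg (fun hc => hgb ((hB' g g₀ h).mpr hc)), mul_zero]
    · rw [if_neg (fun hc => hga hc.1), if_neg (fun hc => hga ((hA' g h h₀).mpr hc)), zero_mul]
    · rw [if_neg (fun hc => hga hc.1), if_neg (fun hc => hga ((hA' g h h₀).mpr hc)), zero_mul]
  have htriv1 : ∀ g h h', m g h ∈ (Set.univ : Set (κ → Bool)) ↔ m g h' ∈ Set.univ := by simp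
  have htriv2 : ∀ g g' h, m g h ∈ (Set.univ : Set (κ → Bool)) ↔ m g' h ∈ Set.univ := by simp
  have e1 := key A Set.univ (fun g h h' => hAm g h h') htriv2
  have e2 := key Set.univ B htriv1 (fun g g' h => hBm g g' h)
  have e3 := key A B (fun g h h' => hAm g h h') (fun g g' h => hBm g g' h)
  have e4 := key Set.univ Set.univ htriv1 htriv2
  rw [Set.inter_univ] at e1
  rw [Set.univ_inter] at e2
  rw [Set.univ_inter] at e4
  have huniv : mu κ P hP Set.univ = 1 := measure_univ
  rw [huniv] at e4
  simp only [Set.mem_univ, if_true] at e1 e2 e4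
  rw [e1, e2, e3]
  calc (∑ g, if m g h₀ ∈ A then ∏ e ∈ J, W P (m g h₀ e) else 0) *
        (∑ h, if m g₀ h ∈ B then ∏ e ∈ Jᶜ, W P (m g₀ h e) else 0)
      = ((∑ g, if m g h₀ ∈ A then ∏ e ∈ J, W P (m g h₀ e) else 0) *
        (∑ h, if m g₀ h ∈ B then ∏ e ∈ Jᶜ, W P (m g₀ h e) else 0)) *
        ((∑ g, ∏ e ∈ J, W P (m g h₀ e)) * (∑ h, ∏ e ∈ Jᶜ, W P (m g₀ h e))) := by
        rw [← e4, mul_one]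
    _ = _ := by ring

lemma mu_cylinder (P : ℝ≥0∞) (hP : P ≤ 1) (J : Finset κ) (b : κ → Bool) :
    mu κ P hP {f | ∀ e ∈ J, f e = b e} = ∏ e ∈ J, W P (b e) := by
  classical
  have h1 : {f : κ → Bool | ∀ e ∈ J, f e = b e} =
      Set.pi Set.univ (fun e => if e ∈ J then {b e} else Set.univ) := by
    ext f
    simp only [Set.mem_setOf_eq, Set.mem_pi, Set.mem_univ, forall_true_left]
    constructor
    · intro hf e
      by_cases he : e ∈ J <;> simp [he, hf]
    · intro hf e he
      have := hf e
      simpa [he] using this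
  rw [h1, mu, Measure.pi_pi, ← Finset.prod_mul_prod_compl J]
  have h2 : ∀ e ∈ Jᶜ, nu P hP (if e ∈ J then {b e} else Set.univ) = 1 := by
    intro e he
    rw [if_neg (Finset.mem_compl.mp he)]
    exact measure_univ
  rw [Finset.prod_congr rfl h2, Finset.prod_const_one, mul_one]
  exact Finset.prod_congr rfl fun e he => by rw [if_pos he, nu_singleton]

lemma mu_count (P : ℝ≥0∞) (hP : P ≤ 1) (S : Finset β) (k : β → κ) (hk : Set.InjOn k S)
    (D : ℕ) :
    mu κ P hP {f | ((S.filter fun x => f (k x) = true).card ≤ D)} ≤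
      ∑ j ∈ Finset.range (D + 1), (S.card.choose j : ℝ≥0∞) * P ^ j * (1 - P) ^ (S.card - j) := by
  classical
  set Cyl : Finset β → Set (κ → Bool) :=
    fun T => {f | ∀ e ∈ S.image k, f e = decide (∃ x ∈ T, k x = e)} with hCyl
  have hcover : {f : κ → Bool | ((S.filter fun x => f (k x) = true).card ≤ D)} ⊆
      ⋃ T ∈ (S.powerset.filter fun T => T.card ≤ D), Cyl T := by
    intro f hf
    simp only [Set.mem_iUnion]
    refine ⟨S.filter fun x => f (k x) = true, ?_, ?_⟩
    · simp only [Finset.mem_filter, Finset.mem_powerset]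
      exact ⟨Finset.filter_subset _ _, hf⟩
    · intro e he
      obtain ⟨x, hx, rfl⟩ := Finset.mem_image.mp he
      have : (∃ y ∈ S.filter (fun x => f (k x) = true), k y = k x) ↔ f (k x) = true := by
        constructor
        · rintro ⟨y, hy, hyx⟩
          have : y = x := hk (Finset.mem_filter.mp hy).1 hx hyx
          subst this
          exact (Finset.mem_filter.mp hy).2
        · intro hfx
          exact ⟨x, Finset.mem_filter.mpr ⟨hx, hfx⟩, rfl⟩
      rw [decide_eq_decide.mpr this, Bool.decide_coe]
  have hmeas : ∀ T : Finset β, T ∈ (S.powerset.filter fun T => T.card ≤ D) →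
      mu κ P hP (Cyl T) = P ^ T.card * (1 - P) ^ (S.card - T.card) := by
    intro T hT
    obtain ⟨hTS, hTD⟩ := Finset.mem_filter.mp hT
    have hTS' := Finset.mem_powerset.mp hTS
    rw [hCyl]
    rw [mu_cylinder P hP (S.image k) (fun e => decide (∃ x ∈ T, k x = e))]
    rw [Finset.prod_image (fun x hx y hy => hk hx hy)]
    have h3 : ∀ x ∈ S, W P (decide (∃ y ∈ T, k y = k x)) = if x ∈ T then P else 1 - P := by
      intro x hx
      have : (∃ y ∈ T, k y = k x) ↔ x ∈ T := by
        constructor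
        · rintro ⟨y, hy, hyx⟩
          rwa [← hk (hTS' hy) hx hyx]
        · intro h; exact ⟨x, h, rfl⟩
      by_cases hxT : x ∈ T <;> simp [this, hxT, W]
    rw [Finset.prod_congr rfl h3, Finset.prod_ite, Finset.prod_const, Finset.prod_const,
      Finset.filter_mem_eq_inter, Finset.inter_eq_right.mpr hTS', ← Finset.sdiff_eq_filter,
      Finset.card_sdiff_of_subset hTS']
  calc mu κ P hP {f | ((S.filter fun x => f (k x) = true).card ≤ D)}
      ≤ ∑ T ∈ (S.powerset.filter fun T => T.card ≤ D), mu κ P hP (Cyl T) :=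
        le_trans (measure_mono hcover) (measure_biUnion_finset_le _ _)
    _ = ∑ T ∈ (S.powerset.filter fun T => T.card ≤ D),
          P ^ T.card * (1 - P) ^ (S.card - T.card) := Finset.sum_congr rfl hmeas
    _ = ∑ j ∈ Finset.range (D + 1), (S.card.choose j : ℝ≥0∞) * P ^ j * (1 - P) ^ (S.card - j) := by
        have hsplit : (S.powerset.filter fun T => T.card ≤ D) =
            (Finset.range (D + 1)).biUnion (fun j => Finset.powersetCard j S) := by
          ext T
          simp only [Finset.mem_filter, Finset.mem_powerset, Finset.mem_biUnion,
            Finset.mem_range, Finset.mem_powersetCard, Nat.lt_succ_iff]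
          constructor
          · rintro ⟨h1, h2⟩; exact ⟨T.card, h2, h1, rfl⟩
          · rintro ⟨j, hj, h1, rfl⟩; exact ⟨h1, hj⟩
        rw [hsplit, Finset.sum_biUnion]
        · refine Finset.sum_congr rfl fun j hj => ?_
          have : ∀ T ∈ Finset.powersetCard j S,
              P ^ T.card * (1 - P) ^ (S.card - T.card) = P ^ j * (1 - P) ^ (S.card - j) := by
            intro T hT
            rw [(Finset.mem_powersetCard.mp hT).2]
          rw [Finset.sum_congr rfl this, Finset.sum_const, Finset.card_powersetCard,
            nsmul_eq_mul, mul_assoc]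
        · intro a _ b _ hab
          simp only [Finset.disjoint_left, Finset.mem_powersetCard]
          rintro T ⟨_, rfl⟩ ⟨_, h⟩
          exact hab h

end Core

lemma real_tail (m D : ℕ) (pr t : ℝ) (hp0 : 0 ≤ pr) (hp1 : pr ≤ 1) (ht0 : 0 < t) (ht1 : t ≤ 1) :
    ∑ j ∈ Finset.range (D + 1), (m.choose j : ℝ) * pr ^ j * (1 - pr) ^ (m - j) ≤
      Real.exp (-(1 - t) * pr * m) / t ^ D := by
  have hq0 : (0:ℝ) ≤ 1 - pr := by linarith
  have htD : (0:ℝ) < t ^ D := pow_pos ht0 D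
  have step1 : ∑ j ∈ Finset.range (D + 1), (m.choose j : ℝ) * pr ^ j * (1 - pr) ^ (m - j) ≤
      (∑ j ∈ Finset.range (D + 1), (m.choose j : ℝ) * (t * pr) ^ j * (1 - pr) ^ (m - j)) / t ^ D := by
    rw [Finset.sum_div]
    refine Finset.sum_le_sum fun j hj => ?_
    have hj' : j ≤ D := Nat.lt_succ_iff.mp (Finset.mem_range.mp hj)
    have h2 : t ^ D ≤ t ^ j := pow_le_pow_of_le_one ht0.le ht1 hj'
    have key : pr ^ j * t ^ D ≤ (t * pr) ^ j := by
      rw [mul_pow]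
      calc pr ^ j * t ^ D ≤ pr ^ j * t ^ j :=
            mul_le_mul_of_nonneg_left h2 (pow_nonneg hp0 j)
        _ = t ^ j * pr ^ j := mul_comm _ _
    rw [le_div_iff₀ htD]
    calc (m.choose j : ℝ) * pr ^ j * (1 - pr) ^ (m - j) * t ^ D
        = ((m.choose j : ℝ) * (1 - pr) ^ (m - j)) * (pr ^ j * t ^ D) := by ring
      _ ≤ ((m.choose j : ℝ) * (1 - pr) ^ (m - j)) * (t * pr) ^ j :=
          mul_le_mul_of_nonneg_left key (by positivity)
      _ = (m.choose j : ℝ) * (t * pr) ^ j * (1 - pr) ^ (m - j) := by ring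
  have step2 : ∑ j ∈ Finset.range (D + 1), (m.choose j : ℝ) * (t * pr) ^ j * (1 - pr) ^ (m - j) ≤
      (1 - (1 - t) * pr) ^ m := by
    have hbinom : (t * pr + (1 - pr)) ^ m =
        ∑ j ∈ Finset.range (m + 1), (t * pr) ^ j * (1 - pr) ^ (m - j) * (m.choose j : ℝ) :=
      add_pow _ _ m
    have heq : (1 - (1 - t) * pr) ^ m =
        ∑ j ∈ Finset.range (m + 1), (m.choose j : ℝ) * (t * pr) ^ j * (1 - pr) ^ (m - j) := by
      rw [show (1 - (1 - t) * pr) = t * pr + (1 - pr) by ring, hbinom]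
      exact Finset.sum_congr rfl fun j _ => by ring
    rw [heq]
    rcases le_or_gt (D + 1) (m + 1) with hDm | hDm
    · exact Finset.sum_le_sum_of_subset_of_nonneg
        (Finset.range_subset_range.mpr hDm) (fun j _ _ => by positivity)
    · rw [Finset.sum_subset (Finset.range_subset_range.mpr hDm.le)]
      intro j hj hj'
      have hmj : m < j := by
        by_contra h
        exact hj' (Finset.mem_range.mpr (Nat.lt_succ_of_le (not_lt.mp h)))
      rw [Nat.choose_eq_zero_of_lt hmj]
      simp
  have step3 : (1 - (1 - t) * pr) ^ m ≤ Real.exp (-(1 - t) * pr * m) := by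
    have h1 : (0:ℝ) ≤ 1 - (1 - t) * pr := by nlinarith
    have h2 : 1 - (1 - t) * pr ≤ Real.exp (-((1 - t) * pr)) := by
      have := Real.add_one_le_exp (-((1 - t) * pr))
      linarith
    calc (1 - (1 - t) * pr) ^ m ≤ (Real.exp (-((1 - t) * pr))) ^ m :=
          pow_le_pow_left₀ h1 h2 m
      _ = Real.exp (-((1 - t) * pr) * m) := by
          rw [← Real.exp_nat_mul]; ring_nf
      _ = Real.exp (-(1 - t) * pr * m) := by ring_nf
  calc ∑ j ∈ Finset.range (D + 1), (m.choose j : ℝ) * pr ^ j * (1 - pr) ^ (m - j)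
      ≤ (∑ j ∈ Finset.range (D + 1), (m.choose j : ℝ) * (t * pr) ^ j * (1 - pr) ^ (m - j)) / t ^ D :=
        step1
    _ ≤ (1 - (1 - t) * pr) ^ m / t ^ D := div_le_div_of_nonneg_right step2 htD.le
    _ ≤ Real.exp (-(1 - t) * pr * m) / t ^ D := div_le_div_of_nonneg_right step3 htD.le



lemma T0 : Tendsto (fun x : ℝ => (2 + 5 * Real.log x) / Real.sqrt x) atTop (nhds 0) := by
  have hsq : Tendsto Real.sqrt atTop atTop := by
    have h := tendsto_rpow_atTop (show (0:ℝ) < 1/2 by norm_num)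
    refine h.congr' ?_
    filter_upwards [eventually_ge_atTop (0:ℝ)] with x hx
    rw [Real.sqrt_eq_rpow]

  have t1 : Tendsto (fun x : ℝ => 2 / Real.sqrt x) atTop (nhds 0) :=
    tendsto_const_nhds.div_atTop hsq
  have t2 : Tendsto (fun y : ℝ => Real.log y / y) atTop (nhds 0) :=
    Real.isLittleO_log_id_atTop.tendsto_div_nhds_zero
  have t3 : Tendsto (fun x : ℝ => Real.log (Real.sqrt x) / Real.sqrt x) atTop (nhds 0) :=
    t2.comp hsq
  have t4 : Tendsto (fun x : ℝ => 2 / Real.sqrt x + 10 * (Real.log (Real.sqrt x) / Real.sqrt x))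
      atTop (nhds 0) := by
    have := t1.add (t3.const_mul 10)
    simpa using this
  refine t4.congr' ?_
  filter_upwards [eventually_gt_atTop (0:ℝ)] with x hx
  have hs0 : 0 < Real.sqrt x := Real.sqrt_pos.mpr hx
  rw [Real.log_sqrt hx.le]
  field_simp
  ring

lemma Utend : Tendsto (fun n : ℕ => 2 * (Real.log n) ^ 4 * Real.exp (-(1/2) * Real.log n))
    atTop (nhds 0) := by
  have h1 : (fun x : ℝ => Real.log x ^ (4:ℝ)) =o[atTop] fun x => x ^ ((1:ℝ)/2) :=
    isLittleO_log_rpow_rpow_atTop 4 (by norm_num)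
  have h2 : Tendsto (fun x : ℝ => Real.log x ^ (4:ℝ) / x ^ ((1:ℝ)/2)) atTop (nhds 0) :=
    h1.tendsto_div_nhds_zero
  have h3 : Tendsto (fun n : ℕ => Real.log n ^ (4:ℝ) / (n:ℝ) ^ ((1:ℝ)/2)) atTop (nhds 0) :=
    h2.comp tendsto_natCast_atTop_atTop
  have h4 := h3.const_mul (2:ℝ)
  rw [mul_zero] at h4
  refine h4.congr' ?_
  filter_upwards [eventually_ge_atTop 3] with n hn
  have hn1 : (1:ℝ) ≤ (n:ℝ) := by exact_mod_cast le_trans (by norm_num) hn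
  have hn0 : (0:ℝ) < n := lt_of_lt_of_le one_pos hn1
  have hlog0 : 0 ≤ Real.log n := Real.log_nonneg hn1
  have hrpow : (n:ℝ) ^ ((1:ℝ)/2) = Real.exp ((1/2) * Real.log n) := by
    rw [Real.rpow_def_of_pos hn0]; ring_nf
  rw [show ((4:ℝ)) = ((4:ℕ):ℝ) by norm_num, Real.rpow_natCast (Real.log n) 4, hrpow,
    show -(1/2) * Real.log n = -(1/2 * Real.log n) by ring, Real.exp_neg]
  field_simp

lemma Rtend (w : ℕ → ℝ) (hw : Tendsto w atTop atTop)
    (hwo : w =o[atTop] fun n : ℕ => Real.log (Real.log n))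
    (p : ℕ → ℝ) (hp01 : ∀ n, 0 ≤ p n ∧ p n ≤ 1)
    (hlo : ∀ᶠ n : ℕ in atTop, (Real.log n + w n) / n ≤ p n)
    (hhi : ∀ᶠ n : ℕ in atTop, p n ≤ w n * Real.log n / n) :
    Tendsto (fun n : ℕ =>
      ((n:ℝ)^2 * p n + (n:ℝ)^3 * (p n)^2) *
        (Real.exp (-(1 - 1/Real.sqrt (Real.log (Real.log n))) * p n * ((n:ℝ) - 3)) /
          (1/Real.sqrt (Real.log (Real.log n))) ^
            (⌊5 * Real.log n / Real.sqrt (Real.log (Real.log n))⌋₊)) ^ 2)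
      atTop (nhds 0) := by
  set L : ℕ → ℝ := fun n => Real.log (Real.log n) with hLdef
  have tendL : Tendsto L atTop atTop :=
    (Real.tendsto_log_atTop.comp Real.tendsto_log_atTop).comp tendsto_natCast_atTop_atTop
  have tendlog : Tendsto (fun n : ℕ => Real.log n) atTop atTop :=
    Real.tendsto_log_atTop.comp tendsto_natCast_atTop_atTop
  have hL1 : ∀ᶠ n : ℕ in atTop, 1 ≤ L n := tendL.eventually_ge_atTop 1
  have hlog1 : ∀ᶠ n : ℕ in atTop, 1 ≤ Real.log n := tendlog.eventually_ge_atTop 1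
  have hw3 : ∀ᶠ n : ℕ in atTop, 3 ≤ w n := hw.eventually_ge_atTop 3
  have hwL : ∀ᶠ n : ℕ in atTop, |w n| ≤ 1 * |L n| := by
    simpa [Real.norm_eq_abs] using hwo.bound one_pos
  have hF4 : ∀ᶠ n : ℕ in atTop, (2 + 5 * Real.log (L n)) / Real.sqrt (L n) < 1/2 :=
    (T0.comp tendL).eventually_lt_const (by norm_num)
  have hn3 : ∀ᶠ n : ℕ in atTop, (3:ℝ) ≤ (n:ℝ) := by
    filter_upwards [eventually_ge_atTop 3] with n hn; exact_mod_cast hn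
  apply squeeze_zero' (g := fun n : ℕ => 2 * (Real.log n) ^ 4 * Real.exp (-(1/2) * Real.log n))
  · -- nonnegativity
    filter_upwards [hL1] with n hL1n
    have hs : 0 < Real.sqrt (L n) := Real.sqrt_pos.mpr (by linarith)
    have := (hp01 n).1
    positivity
  · -- main bound
    filter_upwards [hL1, hlog1, hw3, hwL, hF4, hn3, hlo, hhi] with n hL1n hlog1n hw3n hwLn
      hF4n hn3n hlon hhin
    obtain ⟨hp0, hp1⟩ := hp01 n
    have hn0 : (0:ℝ) < n := by linarith
    have hLnn : (0:ℝ) ≤ L n := by linarith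
    have hs1 : 1 ≤ Real.sqrt (L n) := by
      rw [show (1:ℝ) = Real.sqrt 1 by simp]
      exact Real.sqrt_le_sqrt hL1n
    have hs0 : 0 < Real.sqrt (L n) := lt_of_lt_of_le one_pos hs1
    have hL3 : 0 ≤ Real.log (L n) := Real.log_nonneg hL1n
    have hwLn' : w n ≤ L n := by
      calc w n ≤ |w n| := le_abs_self _
        _ ≤ 1 * |L n| := hwLn
        _ = L n := by rw [one_mul, abs_of_nonneg hLnn]
    have hln : Real.log n ≤ (n:ℝ) := by linarith [Real.log_le_sub_one_of_pos hn0]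
    have hLlog : L n ≤ Real.log n := Real.log_le_log (by linarith) hln
    -- p * (n - 3) ≥ log n
    have hnp : Real.log n + w n ≤ (n:ℝ) * p n := by
      rw [div_le_iff₀ hn0] at hlon
      linarith [hlon]
    have hpn3 : Real.log n ≤ p n * ((n:ℝ) - 3) := by nlinarith
    -- floor and exponent facts
    set Dn := ⌊5 * Real.log n / Real.sqrt (L n)⌋₊ with hDn
    have hd0 : 0 ≤ 5 * Real.log n / Real.sqrt (L n) := by positivity
    have hDle : (Dn : ℝ) ≤ 5 * Real.log n / Real.sqrt (L n) := Nat.floor_le hd0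
    have hlogs : Real.log (Real.sqrt (L n)) = Real.log (L n) / 2 := Real.log_sqrt hLnn
    -- rewrite B
    have hBeq : Real.exp (-(1 - 1/Real.sqrt (L n)) * p n * ((n:ℝ) - 3)) /
        (1/Real.sqrt (L n)) ^ Dn =
        Real.exp (-(1 - 1/Real.sqrt (L n)) * p n * ((n:ℝ) - 3) +
          (Dn:ℝ) * Real.log (Real.sqrt (L n))) := by
      rw [Real.exp_add, one_div, inv_pow, div_eq_mul_inv, inv_inv]
      congr 1
      rw [← Real.log_pow, Real.exp_log (pow_pos hs0 _)]
    have hexpo : -(1 - 1/Real.sqrt (L n)) * p n * ((n:ℝ) - 3) +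
        (Dn:ℝ) * Real.log (Real.sqrt (L n)) ≤ -(3/4) * Real.log n := by
      have h1 : 0 ≤ 1 - 1/Real.sqrt (L n) := by
        rw [sub_nonneg, div_le_one hs0]; exact hs1
      have h2 : -(1 - 1/Real.sqrt (L n)) * (p n * ((n:ℝ) - 3)) ≤
          -(1 - 1/Real.sqrt (L n)) * Real.log n := by
        rw [neg_mul, neg_mul, neg_le_neg_iff]
        exact mul_le_mul_of_nonneg_left hpn3 h1
      have h3 : (Dn:ℝ) * Real.log (Real.sqrt (L n)) ≤
          (5 * Real.log n / Real.sqrt (L n)) * (Real.log (L n) / 2) := by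
        rw [hlogs]
        exact mul_le_mul_of_nonneg_right hDle (by linarith)
      have h4 : (2 + 5 * Real.log (L n)) / Real.sqrt (L n) * Real.log n ≤
          (1/2) * Real.log n :=
        mul_le_mul_of_nonneg_right hF4n.le (by linarith)
      have h5 : Real.log n * (1/Real.sqrt (L n)) + 5 * Real.log n / Real.sqrt (L n) *
          (Real.log (L n) / 2) = ((2 + 5 * Real.log (L n)) / Real.sqrt (L n) * Real.log n) / 2 := by
        field_simp
      calc -(1 - 1/Real.sqrt (L n)) * p n * ((n:ℝ) - 3) +
            (Dn:ℝ) * Real.log (Real.sqrt (L n))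
          ≤ -(1 - 1/Real.sqrt (L n)) * Real.log n +
            (5 * Real.log n / Real.sqrt (L n)) * (Real.log (L n) / 2) := by
            rw [mul_assoc]
            exact add_le_add h2 h3
        _ = -Real.log n + (Real.log n * (1/Real.sqrt (L n)) +
            5 * Real.log n / Real.sqrt (L n) * (Real.log (L n) / 2)) := by ring
        _ ≤ -Real.log n + ((1/2) * Real.log n) / 2 := by
            rw [h5]
            linarith [h4]
        _ ≤ -(3/4) * Real.log n := by linarith
    -- bound the prefactor
    have hhin' : p n * (n:ℝ) ≤ w n * Real.log n := by
      rw [le_div_iff₀ hn0] at hhin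
      exact hhin
    have hwlog1 : 1 ≤ w n * Real.log n := by nlinarith
    have hpre : (n:ℝ)^2 * p n + (n:ℝ)^3 * (p n)^2 ≤ 2 * Real.exp (Real.log n) *
        (Real.log n)^4 := by
      rw [Real.exp_log hn0]
      have hb1 : (n:ℝ)^2 * p n ≤ (n:ℝ) * (w n * Real.log n) := by
        nlinarith [mul_le_mul_of_nonneg_left hhin' hn0.le]
      have h6 : (p n * (n:ℝ))^2 ≤ (w n * Real.log n)^2 :=
        pow_le_pow_left₀ (by positivity) hhin' 2
      have hb2 : (n:ℝ)^3 * (p n)^2 ≤ (n:ℝ) * (w n * Real.log n)^2 := by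
        nlinarith [mul_le_mul_of_nonneg_left h6 hn0.le]
      have hb3 : (n:ℝ) * (w n * Real.log n) ≤ (n:ℝ) * (w n * Real.log n)^2 := by
        nlinarith
      have h7 : w n * Real.log n ≤ Real.log n * Real.log n :=
        mul_le_mul_of_nonneg_right (hwLn'.trans hLlog) (by linarith)
      have hb4 : (w n * Real.log n)^2 ≤ (Real.log n)^4 := by
        nlinarith [sq_nonneg (Real.log n), hwlog1]
      nlinarith [hn0]
    have hB : Real.exp (-(1 - 1/Real.sqrt (L n)) * p n * ((n:ℝ) - 3)) /
        (1/Real.sqrt (L n)) ^ Dn ≤ Real.exp (-(3/4) * Real.log n) := by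
      rw [hBeq]
      exact Real.exp_le_exp.mpr hexpo
    have hB0 : 0 ≤ Real.exp (-(1 - 1/Real.sqrt (L n)) * p n * ((n:ℝ) - 3)) /
        (1/Real.sqrt (L n)) ^ Dn := by positivity
    have hB2 : (Real.exp (-(1 - 1/Real.sqrt (L n)) * p n * ((n:ℝ) - 3)) /
        (1/Real.sqrt (L n)) ^ Dn)^2 ≤ (Real.exp (-(3/4) * Real.log n))^2 :=
      pow_le_pow_left₀ hB0 hB 2
    have hkey : Real.exp (Real.log n) * (Real.exp (-(3/4) * Real.log n))^2 =
        Real.exp (-(1/2) * Real.log n) := by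
      rw [sq, ← Real.exp_add, ← Real.exp_add]
      congr 1
      ring
    calc ((n:ℝ)^2 * p n + (n:ℝ)^3 * (p n)^2) * (Real.exp (-(1 - 1/Real.sqrt (L n)) * p n *
          ((n:ℝ) - 3)) / (1/Real.sqrt (L n)) ^ Dn) ^ 2
        ≤ (2 * Real.exp (Real.log n) * (Real.log n)^4) * (Real.exp (-(3/4) * Real.log n))^2 :=
          mul_le_mul hpre hB2 (by positivity) (by positivity)
      _ = 2 * (Real.log n)^4 * (Real.exp (Real.log n) * (Real.exp (-(3/4) * Real.log n))^2) := by
          ring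
      _ = 2 * (Real.log n)^4 * Real.exp (-(1/2) * Real.log n) := by rw [hkey]
  · exact Utend

section Bridge
variable {κ β : Type*} [Fintype κ] [DecidableEq κ] [DecidableEq β]

lemma mu_count_ofReal (pr t : ℝ) (h0 : 0 ≤ pr) (h1 : pr ≤ 1) (ht0 : 0 < t) (ht1 : t ≤ 1)
    (S : Finset β) (k : β → κ) (hk : Set.InjOn k S) (D : ℕ) :
    mu κ (ENNReal.ofReal pr) (ENNReal.ofReal_le_one.mpr h1)
      {f | ((S.filter fun x => f (k x) = true).card ≤ D)} ≤
      ENNReal.ofReal (Real.exp (-(1 - t) * pr * S.card) / t ^ D) := by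
  refine (mu_count _ _ S k hk D).trans ?_
  have hterm : ∀ j ∈ Finset.range (D + 1),
      (S.card.choose j : ℝ≥0∞) * (ENNReal.ofReal pr) ^ j *
        (1 - ENNReal.ofReal pr) ^ (S.card - j) =
      ENNReal.ofReal ((S.card.choose j : ℝ) * pr ^ j * (1 - pr) ^ (S.card - j)) := by
    intro j _
    have hsub : (1 : ℝ≥0∞) - ENNReal.ofReal pr = ENNReal.ofReal (1 - pr) := by
      rw [ENNReal.ofReal_sub 1 h0, ENNReal.ofReal_one]
    rw [hsub, ← ENNReal.ofReal_pow h0, ← ENNReal.ofReal_pow (by linarith),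
      ← ENNReal.ofReal_natCast (S.card.choose j), ← ENNReal.ofReal_mul (Nat.cast_nonneg _),
      ← ENNReal.ofReal_mul (by positivity)]
  rw [Finset.sum_congr rfl hterm, ← ENNReal.ofReal_sum_of_nonneg
    (fun j _ => by
      have hq : (0:ℝ) ≤ 1 - pr := by linarith
      positivity)]
  exact ENNReal.ofReal_le_ofReal (real_tail S.card D pr t h0 h1 ht0 ht1)

end Bridge

section PerN
open SimpleGraph

lemma sym2_fst_inj {V : Type*} (u : Fin 0 ⊕ V) : True := trivial

lemma helper_inj {V : Type*} (u : V) : Function.Injective (fun x : V => s(u, x)) := by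
  intro x y h
  rcases Sym2.eq_iff.mp h with ⟨-, rfl⟩ | ⟨h1, h2⟩
  · rfl
  · rw [h2, ← h1]

lemma helper_not_mem_self {V : Type*} [DecidableEq V] (u v : V) (S : Finset V)
    (hu : u ∉ S) (hv : v ∉ S) : s(u, v) ∉ S.image (fun x => s(u, x)) := by
  intro h
  obtain ⟨x, hx, hEq⟩ := Finset.mem_image.mp h
  rcases Sym2.eq_iff.mp hEq with ⟨-, rfl⟩ | ⟨h1, h2⟩
  · exact hv hx
  · rw [h2] at hx; exact hu hx

lemma helper_not_mem_other {V : Type*} [DecidableEq V] (u a b : V) (S : Finset V)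
    (ha : a ≠ u) (hb : b ≠ u) : s(a, b) ∉ S.image (fun x => s(u, x)) := by
  intro h
  obtain ⟨x, hx, hEq⟩ := Finset.mem_image.mp h
  rcases Sym2.eq_iff.mp hEq with ⟨h1, -⟩ | ⟨h1, -⟩
  · exact ha h1.symm
  · exact hb h1.symm

/-- The per-`n` bound on the bad-event probability. -/
lemma badBound (n : ℕ) (hn3 : 3 ≤ n) (pr t dR : ℝ) (h0 : 0 ≤ pr) (h1 : pr ≤ 1)
    (ht0 : 0 < t) (ht1 : t ≤ 1) (hdR : 0 ≤ dR) :
    mu (Sym2 (Fin n)) (ENNReal.ofReal pr) (ENNReal.ofReal_le_one.mpr h1)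
      ({E : Sym2 (Fin n) → Bool |
        ∀ u v : Fin n, u ≠ v →
          (((SimpleGraph.fromEdgeSet {e | E e = true}).neighborSet u).ncard : ℝ) ≤ dR →
          (((SimpleGraph.fromEdgeSet {e | E e = true}).neighborSet v).ncard : ℝ) ≤ dR →
          ¬ (SimpleGraph.fromEdgeSet {e | E e = true}).Adj u v ∧
          ∀ z : Fin n, ¬ ((SimpleGraph.fromEdgeSet {e | E e = true}).Adj u z ∧
            (SimpleGraph.fromEdgeSet {e | E e = true}).Adj z v)}ᶜ) ≤
      ENNReal.ofReal (((n:ℝ)^2 * pr + (n:ℝ)^3 * pr^2) *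
        (Real.exp (-(1 - t) * pr * ((n:ℝ) - 3)) / t ^ ⌊dR⌋₊) ^ 2) := by
  classical
  set P : ℝ≥0∞ := ENNReal.ofReal pr with hPdef
  have hP : P ≤ 1 := ENNReal.ofReal_le_one.mpr h1
  set D : ℕ := ⌊dR⌋₊ with hD
  set qq : ℝ := Real.exp (-(1 - t) * pr * ((n:ℝ) - 3)) / t ^ D with hqq
  have hqq0 : 0 ≤ qq := by positivity
  set Q : ℝ≥0∞ := ENNReal.ofReal qq with hQ
  set μ := mu (Sym2 (Fin n)) P hP with hmu
  -- the small-degree events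
  set Sm : Fin n → Finset (Fin n) → Set (Sym2 (Fin n) → Bool) := fun u T =>
    {f | ((((Finset.univ.erase u) \ T).filter fun x => f s(u, x) = true).card ≤ D)} with hSm
  set Ad : Sym2 (Fin n) → Set (Sym2 (Fin n) → Bool) := fun e0 => {f | f e0 = true} with hAd
  -- measure of adjacency events
  have muAd : ∀ e0, μ (Ad e0) = P := by
    intro e0
    have h1' : Ad e0 = {f : Sym2 (Fin n) → Bool | ∀ e ∈ ({e0} : Finset (Sym2 (Fin n))),
        f e = (fun _ => true) e} := by
      ext f; simp [hAd]
    rw [h1', mu_cylinder, Finset.prod_singleton]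
    rfl
  -- measure of small events
  have muSm : ∀ (u : Fin n) (T : Finset (Fin n)), T.card ≤ 2 → μ (Sm u T) ≤ Q := by
    intro u T hT
    have hkinj : Set.InjOn (fun x : Fin n => s(u, x)) ((Finset.univ.erase u) \ T : Finset (Fin n)) :=
      fun x _ y _ h => helper_inj u h
    refine le_trans (mu_count_ofReal pr t h0 h1 ht0 ht1 _ _ hkinj D) ?_
    rw [hQ, hqq]
    refine ENNReal.ofReal_le_ofReal (div_le_div_of_nonneg_right ?_ (pow_pos ht0 D).le)
    rw [Real.exp_le_exp]
    have hcard : (n:ℝ) - 3 ≤ (((Finset.univ.erase u) \ T).card : ℝ) := by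
      have h5 : (Finset.univ.erase u).card - T.card ≤ ((Finset.univ.erase u) \ T).card :=
        Finset.le_card_sdiff T _
      have h6 : (Finset.univ.erase u).card = n - 1 := by
        rw [Finset.card_erase_of_mem (Finset.mem_univ u), Finset.card_univ, Fintype.card_fin]
      have h7 : n - 3 ≤ ((Finset.univ.erase u) \ T).card := by omega
      calc (n:ℝ) - 3 = ((n - 3 : ℕ) : ℝ) := by
            rw [Nat.cast_sub hn3]; norm_num
        _ ≤ _ := by exact_mod_cast h7
    have hco : 0 ≤ (1 - t) * pr := mul_nonneg (by linarith) h0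
    nlinarith [mul_le_mul_of_nonneg_left hcard hco]
  -- dependency of events on coordinates
  have hSmdep : ∀ (u : Fin n) (T : Finset (Fin n)) (f g : Sym2 (Fin n) → Bool),
      (∀ e ∈ ((Finset.univ.erase u) \ T).image (fun x => s(u, x)), f e = g e) →
      f ∈ Sm u T → g ∈ Sm u T := by
    intro u T f g hag hf
    have : ((Finset.univ.erase u) \ T).filter (fun x => g s(u, x) = true) =
        ((Finset.univ.erase u) \ T).filter (fun x => f s(u, x) = true) := by
      refine Finset.filter_congr fun x hx => ?_
      rw [hag s(u, x) (Finset.mem_image_of_mem _ hx)]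
    simpa [hSm, this] using hf
  -- E1 bound
  have muE1 : ∀ u v : Fin n, u ≠ v →
      μ (Sm u {v} ∩ (Sm v {u} ∩ Ad s(u, v))) ≤ Q * (Q * P) := by
    intro u v huv
    have hsplit1 : μ (Sm u {v} ∩ (Sm v {u} ∩ Ad s(u, v))) =
        μ (Sm u {v}) * μ (Sm v {u} ∩ Ad s(u, v)) := by
      refine mu_split P hP (((Finset.univ.erase u) \ {v}).image (fun x => s(u, x))) _ _
        (hSmdep u {v}) ?_
      intro f g hag ⟨hf1, hf2⟩
      constructor
      · refine hSmdep v {u} f g ?_ hf1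
        intro e he
        obtain ⟨y, hy, rfl⟩ := Finset.mem_image.mp he
        refine hag _ (helper_not_mem_other u v y _ (Ne.symm huv) ?_)
        simp only [Finset.mem_sdiff, Finset.mem_erase, Finset.mem_singleton,
          Finset.mem_univ] at hy
        tauto
      · have : f s(u, v) = g s(u, v) := by
          refine hag _ (helper_not_mem_self u v _ ?_ ?_) <;>
            simp [Finset.mem_sdiff, Finset.mem_erase]
        simpa [hAd, this] using hf2
    have hsplit2 : μ (Sm v {u} ∩ Ad s(u, v)) = μ (Sm v {u}) * μ (Ad s(u, v)) := by
      refine mu_split P hP (((Finset.univ.erase v) \ {u}).image (fun x => s(v, x))) _ _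
        (hSmdep v {u}) ?_
      intro f g hag hf
      have : f s(u, v) = g s(u, v) := by
        rw [Sym2.eq_swap]
        refine hag _ (helper_not_mem_self v u _ ?_ ?_) <;>
          simp [Finset.mem_sdiff, Finset.mem_erase]
      simpa [hAd, this] using hf
    rw [hsplit1, hsplit2, muAd]
    exact mul_le_mul' (muSm u {v} (by simp)) (mul_le_mul' (muSm v {u} (by simp)) le_rfl)
  -- E2 bound
  have muE2 : ∀ u v z : Fin n, u ≠ v → z ≠ u → z ≠ v →
      μ (Sm u {v, z} ∩ (Sm v {u, z} ∩ (Ad s(u, z) ∩ Ad s(z, v)))) ≤ Q * (Q * (P * P)) := by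
    intro u v z huv hzu hzv
    have hsplit1 : μ (Sm u {v, z} ∩ (Sm v {u, z} ∩ (Ad s(u, z) ∩ Ad s(z, v)))) =
        μ (Sm u {v, z}) * μ (Sm v {u, z} ∩ (Ad s(u, z) ∩ Ad s(z, v))) := by
      refine mu_split P hP (((Finset.univ.erase u) \ {v, z}).image (fun x => s(u, x))) _ _
        (hSmdep u {v, z}) ?_
      rintro f g hag ⟨hf1, hf2, hf3⟩
      refine ⟨?_, ?_, ?_⟩
      · refine hSmdep v {u, z} f g ?_ hf1
        intro e he
        obtain ⟨y, hy, rfl⟩ := Finset.mem_image.mp he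
        simp only [Finset.mem_sdiff, Finset.mem_erase, Finset.mem_insert, Finset.mem_singleton,
          Finset.mem_univ] at hy
        refine hag _ (helper_not_mem_other u v y _ (Ne.symm huv) ?_)
        tauto
      · have : f s(u, z) = g s(u, z) := by
          refine hag _ (helper_not_mem_self u z _ ?_ ?_) <;>
            simp [Finset.mem_sdiff, Finset.mem_erase]
        simpa [hAd, this] using hf2
      · have : f s(z, v) = g s(z, v) := by
          refine hag _ (helper_not_mem_other u z v _ hzu (Ne.symm huv)) 
        simpa [hAd, this] using hf3
    have hsplit2 : μ (Sm v {u, z} ∩ (Ad s(u, z) ∩ Ad s(z, v))) =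
        μ (Sm v {u, z}) * μ (Ad s(u, z) ∩ Ad s(z, v)) := by
      refine mu_split P hP (((Finset.univ.erase v) \ {u, z}).image (fun x => s(v, x))) _ _
        (hSmdep v {u, z}) ?_
      rintro f g hag ⟨hf2, hf3⟩
      constructor
      · have : f s(u, z) = g s(u, z) := by
          refine hag _ (helper_not_mem_other v u z _ huv hzv)
        simpa [hAd, this] using hf2
      · have : f s(z, v) = g s(z, v) := by
          rw [Sym2.eq_swap]
          refine hag _ (helper_not_mem_self v z _ ?_ ?_) <;>
            simp [Finset.mem_sdiff, Finset.mem_erase]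
        simpa [hAd, this] using hf3
    have hsplit3 : μ (Ad s(u, z) ∩ Ad s(z, v)) = μ (Ad s(u, z)) * μ (Ad s(z, v)) := by
      refine mu_split P hP {s(u, z)} _ _ ?_ ?_
      · intro f g hag hf
        have : f s(u, z) = g s(u, z) := hag _ (Finset.mem_singleton_self _)
        simpa [hAd, this] using hf
      · intro f g hag hf
        have hne : s(z, v) ∉ ({s(u, z)} : Finset (Sym2 (Fin n))) := by
          simp only [Finset.mem_singleton]
          intro h
          rcases Sym2.eq_iff.mp h with ⟨h1, -⟩ | ⟨-, h2⟩
          · exact hzu h1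
          · exact huv h2.symm
        have : f s(z, v) = g s(z, v) := hag _ hne
        simpa [hAd, this] using hf
    rw [hsplit1, hsplit2, hsplit3, muAd, muAd]
    have hc2 : ∀ a b : Fin n, ({a, b} : Finset (Fin n)).card ≤ 2 := fun a b =>
      (Finset.card_insert_le _ _).trans (by simp)
    exact mul_le_mul' (muSm u {v, z} (hc2 v z))
      (mul_le_mul' (muSm v {u, z} (hc2 u z)) le_rfl)

  -- covering
  set Bad : Set (Sym2 (Fin n) → Bool) := {E : Sym2 (Fin n) → Bool |
        ∀ u v : Fin n, u ≠ v →
          (((SimpleGraph.fromEdgeSet {e | E e = true}).neighborSet u).ncard : ℝ) ≤ dR →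
          (((SimpleGraph.fromEdgeSet {e | E e = true}).neighborSet v).ncard : ℝ) ≤ dR →
          ¬ (SimpleGraph.fromEdgeSet {e | E e = true}).Adj u v ∧
          ∀ z : Fin n, ¬ ((SimpleGraph.fromEdgeSet {e | E e = true}).Adj u z ∧
            (SimpleGraph.fromEdgeSet {e | E e = true}).Adj z v)}ᶜ with hBad
  have hsmallSm : ∀ (f : Sym2 (Fin n) → Bool) (u : Fin n) (T : Finset (Fin n)),
      (((SimpleGraph.fromEdgeSet {e | f e = true}).neighborSet u).ncard : ℝ) ≤ dR →
      f ∈ Sm u T := by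
    intro f u T hsmall
    have hsub : (((Finset.univ.erase u) \ T).filter fun x => f s(u, x) = true : Finset (Fin n))
        ⊆ ((SimpleGraph.fromEdgeSet {e | f e = true}).neighborSet u).toFinset := by
      intro x hx
      obtain ⟨hx1, hx2⟩ := Finset.mem_filter.mp hx
      simp only [Finset.mem_sdiff, Finset.mem_erase] at hx1
      rw [Set.mem_toFinset, SimpleGraph.mem_neighborSet]
      exact (SimpleGraph.fromEdgeSet_adj _).mpr ⟨hx2, (hx1.1.1).symm⟩
    have hcard : ((((Finset.univ.erase u) \ T).filter fun x => f s(u, x) = true).card : ℝ)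
        ≤ dR := by
      refine le_trans ?_ hsmall
      have := Finset.card_le_card hsub
      rw [Set.ncard_eq_toFinset_card']
      exact_mod_cast this
    exact Nat.le_floor hcard
  have hadj_coord : ∀ (f : Sym2 (Fin n) → Bool) (a b : Fin n),
      (SimpleGraph.fromEdgeSet {e | f e = true}).Adj a b → f s(a, b) = true := by
    intro f a b h
    exact ((SimpleGraph.fromEdgeSet_adj _).mp h).1
  have hcover : Bad ⊆
      (⋃ q ∈ (Finset.univ.offDiag : Finset (Fin n × Fin n)),
        Sm q.1 {q.2} ∩ (Sm q.2 {q.1} ∩ Ad s(q.1, q.2))) ∪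
      (⋃ q ∈ (Finset.univ.offDiag : Finset (Fin n × Fin n)),
        ⋃ z ∈ ((Finset.univ.erase q.1).erase q.2),
          Sm q.1 {q.2, z} ∩ (Sm q.2 {q.1, z} ∩ (Ad s(q.1, z) ∩ Ad s(z, q.2)))) := by
    intro f hf
    simp only [hBad, Set.mem_compl_iff, Set.mem_setOf_eq, not_forall] at hf
    obtain ⟨u, v, huv, hsu, hsv, hbadx⟩ := hf
    by_cases hadj : (SimpleGraph.fromEdgeSet {e | f e = true}).Adj u v
    · left
      simp only [Set.mem_iUnion]
      refine ⟨(u, v), Finset.mem_offDiag.mpr ⟨Finset.mem_univ _, Finset.mem_univ _, huv⟩, ?_⟩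
      exact ⟨hsmallSm f u {v} hsu, hsmallSm f v {u} hsv, hadj_coord f u v hadj⟩
    · right
      have hz : ∃ z, (SimpleGraph.fromEdgeSet {e | f e = true}).Adj u z ∧
          (SimpleGraph.fromEdgeSet {e | f e = true}).Adj z v := by
        by_contra hc
        push_neg at hc
        exact hbadx ⟨hadj, fun z hzz => hc z hzz.1 hzz.2⟩
      obtain ⟨z, hz1, hz2⟩ := hz
      have hzu : z ≠ u := fun h => (SimpleGraph.irrefl _) (h ▸ hz1)
      have hzv : z ≠ v := fun h => (SimpleGraph.irrefl _) (h ▸ hz2)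
      simp only [Set.mem_iUnion]
      refine ⟨(u, v), Finset.mem_offDiag.mpr ⟨Finset.mem_univ _, Finset.mem_univ _, huv⟩,
        z, ?_, ?_⟩
      · exact Finset.mem_erase.mpr ⟨hzv, Finset.mem_erase.mpr ⟨hzu, Finset.mem_univ _⟩⟩
      · exact ⟨hsmallSm f u {v, z} hsu, hsmallSm f v {u, z} hsv,
          hadj_coord f u z hz1, hadj_coord f z v hz2⟩
  -- counting
  have hcard_off : ((Finset.univ.offDiag : Finset (Fin n × Fin n)).card : ℝ≥0∞) ≤
      ((n:ℝ≥0∞)) ^ 2 := by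
    have h1 : (Finset.univ.offDiag : Finset (Fin n × Fin n)).card ≤ n * n := by
      calc (Finset.univ.offDiag : Finset (Fin n × Fin n)).card
          ≤ Fintype.card (Fin n × Fin n) := Finset.card_le_univ _
        _ = n * n := by simp [Fintype.card_prod]
    calc ((Finset.univ.offDiag : Finset (Fin n × Fin n)).card : ℝ≥0∞) ≤ ((n * n : ℕ) : ℝ≥0∞) := by
          exact_mod_cast h1
      _ = (n:ℝ≥0∞) ^ 2 := by push_cast; ring
  have hcard_in : ∀ q : Fin n × Fin n,
      ((((Finset.univ.erase q.1).erase q.2).card : ℝ≥0∞)) ≤ (n:ℝ≥0∞) := by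
    intro q
    have : ((Finset.univ.erase q.1).erase q.2).card ≤ n := by
      calc ((Finset.univ.erase q.1).erase q.2).card ≤ Fintype.card (Fin n) :=
        Finset.card_le_univ _
      _ = n := Fintype.card_fin n
    exact_mod_cast this
  have hU1 : μ (⋃ q ∈ (Finset.univ.offDiag : Finset (Fin n × Fin n)),
      Sm q.1 {q.2} ∩ (Sm q.2 {q.1} ∩ Ad s(q.1, q.2))) ≤ (n:ℝ≥0∞) ^ 2 * (Q * (Q * P)) := by
    refine le_trans (measure_biUnion_finset_le _ _) ?_
    refine le_trans (Finset.sum_le_card_nsmul _ _ (Q * (Q * P)) ?_) ?_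
    · intro q hq
      exact muE1 q.1 q.2 (Finset.mem_offDiag.mp hq).2.2
    · rw [nsmul_eq_mul]
      exact mul_le_mul_left hcard_off _
  have hU2 : μ (⋃ q ∈ (Finset.univ.offDiag : Finset (Fin n × Fin n)),
      ⋃ z ∈ ((Finset.univ.erase q.1).erase q.2),
        Sm q.1 {q.2, z} ∩ (Sm q.2 {q.1, z} ∩ (Ad s(q.1, z) ∩ Ad s(z, q.2)))) ≤
      (n:ℝ≥0∞) ^ 2 * ((n:ℝ≥0∞) * (Q * (Q * (P * P)))) := by
    refine le_trans (measure_biUnion_finset_le _ _) ?_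
    refine le_trans (Finset.sum_le_card_nsmul _ _ ((n:ℝ≥0∞) * (Q * (Q * (P * P)))) ?_) ?_
    · intro q hq
      obtain ⟨-, -, hqq'⟩ := Finset.mem_offDiag.mp hq
      refine le_trans (measure_biUnion_finset_le _ _) ?_
      refine le_trans (Finset.sum_le_card_nsmul _ _ (Q * (Q * (P * P))) ?_) ?_
      · intro z hzmem
        obtain ⟨hzv, hzu, -⟩ : z ≠ q.2 ∧ z ≠ q.1 ∧ True := by
          have h1 := Finset.mem_erase.mp hzmem
          have h2 := Finset.mem_erase.mp h1.2
          exact ⟨h1.1, h2.1, trivial⟩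
        exact muE2 q.1 q.2 z hqq' hzu hzv
      · rw [nsmul_eq_mul]
        exact mul_le_mul_left (hcard_in q) _
    · rw [nsmul_eq_mul]
      exact mul_le_mul_left hcard_off _
  -- put everything together
  have htotal : μ Bad ≤ (n:ℝ≥0∞) ^ 2 * (Q * (Q * P)) +
      (n:ℝ≥0∞) ^ 2 * ((n:ℝ≥0∞) * (Q * (Q * (P * P)))) :=
    le_trans (measure_mono hcover) (le_trans (measure_union_le _ _) (add_le_add hU1 hU2))
  refine le_trans htotal (le_of_eq ?_)
  have hnn : ((n:ℝ≥0∞)) = ENNReal.ofReal ((n:ℝ)) := (ENNReal.ofReal_natCast n).symm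
  have hQP1 : (n:ℝ≥0∞) ^ 2 * (Q * (Q * P)) =
      ENNReal.ofReal ((n:ℝ) ^ 2 * (qq * (qq * pr))) := by
    rw [hnn, hQ, hPdef, ← ENNReal.ofReal_pow (Nat.cast_nonneg n),
      ← ENNReal.ofReal_mul hqq0, ← ENNReal.ofReal_mul hqq0,
      ← ENNReal.ofReal_mul (by positivity)]
  have hQP2 : (n:ℝ≥0∞) ^ 2 * ((n:ℝ≥0∞) * (Q * (Q * (P * P)))) =
      ENNReal.ofReal ((n:ℝ) ^ 2 * ((n:ℝ) * (qq * (qq * (pr * pr))))) := by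
    rw [hnn, hQ, hPdef, ← ENNReal.ofReal_pow (Nat.cast_nonneg n),
      ← ENNReal.ofReal_mul h0, ← ENNReal.ofReal_mul hqq0, ← ENNReal.ofReal_mul hqq0,
      ← ENNReal.ofReal_mul (Nat.cast_nonneg n), ← ENNReal.ofReal_mul (by positivity)]
  rw [hQP1, hQP2, ← ENNReal.ofReal_add (by positivity) (by positivity)]
  congr 1
  ring

end PerN


end Stmt16Aux

open Stmt16Aux in
/-- A.a.s. in `G(n,p)` with `(log n + ω)/n ≤ p ≤ ω log n/n` (`ω → ∞`,
`ω = o(log log n)`): every two distinct vertices of degree at most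
`5 log n/(log log n)^{1/2}` are at distance at least 3 (they are not adjacent and
have no common neighbour). The random graph is sampled by independent
`Bernoulli(p)` indicators on the potential edges. -/
theorem stmt16 (w : ℕ → ℝ) (hw : Tendsto w atTop atTop)
    (hwo : w =o[atTop] fun n : ℕ => Real.log (Real.log n))
    (p : ℕ → ℝ) (hp01 : ∀ n, 0 ≤ p n ∧ p n ≤ 1)
    (hlo : ∀ᶠ n : ℕ in atTop, (Real.log n + w n) / n ≤ p n)
    (hhi : ∀ᶠ n : ℕ in atTop, p n ≤ w n * Real.log n / n) :
    Tendsto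
      (fun n : ℕ =>
        Measure.pi (fun _ : Sym2 (Fin n) =>
          (PMF.bernoulli (p n).toNNReal
            (Real.toNNReal_le_one.mpr (hp01 n).2)).toMeasure)
        {E : Sym2 (Fin n) → Bool |
          ∀ u v : Fin n, u ≠ v →
            (((SimpleGraph.fromEdgeSet {e | E e = true}).neighborSet u).ncard : ℝ)
              ≤ 5 * Real.log n / Real.sqrt (Real.log (Real.log n)) →
            (((SimpleGraph.fromEdgeSet {e | E e = true}).neighborSet v).ncard : ℝ)
              ≤ 5 * Real.log n / Real.sqrt (Real.log (Real.log n)) →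
            ¬ (SimpleGraph.fromEdgeSet {e | E e = true}).Adj u v ∧
            ∀ z : Fin n, ¬ ((SimpleGraph.fromEdgeSet {e | E e = true}).Adj u z ∧
              (SimpleGraph.fromEdgeSet {e | E e = true}).Adj z v)})
      atTop (nhds (1 : ℝ≥0∞)) := by
  classical
  set Good : ∀ n : ℕ, Set (Sym2 (Fin n) → Bool) := fun n =>
    {E : Sym2 (Fin n) → Bool |
      ∀ u v : Fin n, u ≠ v →
        (((SimpleGraph.fromEdgeSet {e | E e = true}).neighborSet u).ncard : ℝ)
          ≤ 5 * Real.log n / Real.sqrt (Real.log (Real.log n)) →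
        (((SimpleGraph.fromEdgeSet {e | E e = true}).neighborSet v).ncard : ℝ)
          ≤ 5 * Real.log n / Real.sqrt (Real.log (Real.log n)) →
        ¬ (SimpleGraph.fromEdgeSet {e | E e = true}).Adj u v ∧
        ∀ z : Fin n, ¬ ((SimpleGraph.fromEdgeSet {e | E e = true}).Adj u z ∧
          (SimpleGraph.fromEdgeSet {e | E e = true}).Adj z v)} with hGood
  set μn : ∀ n : ℕ, Measure (Sym2 (Fin n) → Bool) := fun n =>
    mu (Sym2 (Fin n)) (ENNReal.ofReal (p n)) (ENNReal.ofReal_le_one.mpr (hp01 n).2) with hμn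
  -- the real bound sequence
  set Rb : ℕ → ℝ := fun n =>
    ((n:ℝ)^2 * p n + (n:ℝ)^3 * (p n)^2) *
      (Real.exp (-(1 - 1/Real.sqrt (Real.log (Real.log n))) * p n * ((n:ℝ) - 3)) /
        (1/Real.sqrt (Real.log (Real.log n))) ^
          (⌊5 * Real.log n / Real.sqrt (Real.log (Real.log n))⌋₊)) ^ 2 with hRb
  have hRtend : Tendsto Rb atTop (nhds 0) := Rtend w hw hwo p hp01 hlo hhi
  -- eventually the bad-probability bound applies
  have tendL : Tendsto (fun n : ℕ => Real.log (Real.log n)) atTop atTop :=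
    (Real.tendsto_log_atTop.comp Real.tendsto_log_atTop).comp tendsto_natCast_atTop_atTop
  have tendlog : Tendsto (fun n : ℕ => Real.log n) atTop atTop :=
    Real.tendsto_log_atTop.comp tendsto_natCast_atTop_atTop
  have hBadle : ∀ᶠ n : ℕ in atTop, μn n ((Good n)ᶜ) ≤ ENNReal.ofReal (Rb n) := by
    filter_upwards [tendL.eventually_ge_atTop 1, tendlog.eventually_ge_atTop 0,
      eventually_ge_atTop 3] with n hL1 hlog0 hn3
    have hs1 : 1 ≤ Real.sqrt (Real.log (Real.log n)) := by
      rw [show (1:ℝ) = Real.sqrt 1 by simp]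
      exact Real.sqrt_le_sqrt hL1
    have hs0 : 0 < Real.sqrt (Real.log (Real.log n)) := lt_of_lt_of_le one_pos hs1
    have ht0 : 0 < 1/Real.sqrt (Real.log (Real.log n)) := by positivity
    have ht1 : 1/Real.sqrt (Real.log (Real.log n)) ≤ 1 := by
      rw [div_le_one hs0]; exact hs1
    have hdR : 0 ≤ 5 * Real.log n / Real.sqrt (Real.log (Real.log n)) := by positivity
    exact badBound n hn3 (p n) (1/Real.sqrt (Real.log (Real.log n)))
      (5 * Real.log n / Real.sqrt (Real.log (Real.log n))) (hp01 n).1 (hp01 n).2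
      ht0 ht1 hdR
  have hbad0 : Tendsto (fun n => μn n ((Good n)ᶜ)) atTop (nhds 0) := by
    refine tendsto_of_tendsto_of_tendsto_of_le_of_le' tendsto_const_nhds
      ?_ (Eventually.of_forall fun n => zero_le) hBadle
    have := ENNReal.tendsto_ofReal hRtend
    simpa using this
  have hcompl : ∀ n, μn n (Good n) = 1 - μn n ((Good n)ᶜ) := by
    intro n
    have h1 : μn n (((Good n)ᶜ)ᶜ) = 1 - μn n ((Good n)ᶜ) :=
      prob_compl_eq_one_sub (meas_all _)
    rwa [compl_compl] at h1
  have h1 : Tendsto (fun n => 1 - μn n ((Good n)ᶜ)) atTop (nhds (1 - 0)) :=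
    ENNReal.Tendsto.sub tendsto_const_nhds hbad0 (Or.inl ENNReal.one_ne_top)
  rw [show (1:ℝ≥0∞) - 0 = 1 by simp] at h1
  exact h1.congr fun n => (hcompl n).symm
end

section
/- Let p ∈ (0,1] be a constant and δ ∈ (0, 1/2). In asynchronous majority dynamics on G(n,p) with private signals correct with probability 1/2 + δ, the probability that the process terminates with all vertices announcing the correct opinion 1 is at least (1/2 + δ)·p^{1/p} > 0, and the probability that it terminates with all vertices announcing the incorrect opinion 0 is at least (1/2 − δ)·p^{1/p} > 0, uniformly in n. -/
open MeasureTheory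
open scoped ENNReal

/-- One step of asynchronous majority dynamics on a graph with (Boolean) adjacency
`adj`: the selected vertex `u` announces the majority opinion among its neighbours'
announcements, breaking ties (including the all-`⊥` case) with its private signal. -/
def majStepG (n : ℕ) (adj : Fin n → Fin n → Bool) (X : Fin n → Bool)
    (C : Fin n → Option Bool) (u : Fin n) : Fin n → Option Bool :=
  Function.update C u (some
    (let N1 := (Finset.univ.filter fun w : Fin n => adj u w = true ∧ C w = some true).card
     let N0 := (Finset.univ.filter fun w : Fin n => adj u w = true ∧ C w = some false).card
     if N0 < N1 then true else if N1 < N0 then false else X u))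

/-- Asynchronous majority dynamics: no announcements at time `0`; at time `t+1` the
vertex `sel (t+1)` updates. -/
def majDynG (n : ℕ) (adj : Fin n → Fin n → Bool) (X : Fin n → Bool) (sel : ℕ → Fin n) :
    ℕ → Fin n → Option Bool
  | 0 => fun _ => none
  | t + 1 => majStepG n adj X (majDynG n adj X sel t) (sel (t + 1))

/-- Index type pairing the edge indicators, the selection sequence and the signals. -/
def sigTypeG (n : ℕ) : Sym2 (Fin n) ⊕ ℕ ⊕ Fin n → Type
  | .inl _ => Bool
  | .inr (.inl _) => Fin n
  | .inr (.inr _) => Bool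

instance sigTypeGMeasurable (n : ℕ) :
    ∀ i : Sym2 (Fin n) ⊕ ℕ ⊕ Fin n, MeasurableSpace (sigTypeG n i)
  | .inl _ => (inferInstance : MeasurableSpace Bool)
  | .inr (.inl _) => (inferInstance : MeasurableSpace (Fin n))
  | .inr (.inr _) => (inferInstance : MeasurableSpace Bool)

/-- The combined family of random edges, random selections and random signals. -/
def sigFunG (n : ℕ) {Ω : Type*} (E : Sym2 (Fin n) → Ω → Bool)
    (sel : ℕ → Ω → Fin n) (X : Fin n → Ω → Bool) :
    ∀ i : Sym2 (Fin n) ⊕ ℕ ⊕ Fin n, Ω → sigTypeG n i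
  | .inl e => E e
  | .inr (.inl t) => sel t
  | .inr (.inr v) => X v


-- ===================== auxiliary material =====================

set_option linter.unusedSectionVars false


lemma aux_rpow_le (p t : ℝ) (hp0 : 0 < p) (ht0 : 0 ≤ t) (ht1 : t ≤ 1) :
    p ^ t ≤ 1 - t * (1 - p) := by
  have h := convexOn_exp.2 (Set.mem_univ (Real.log p)) (Set.mem_univ 0)
    ht0 (by linarith : (0:ℝ) ≤ 1 - t) (by ring)
  rw [Real.rpow_def_of_pos hp0]
  have h2 : Real.exp (t * Real.log p + (1 - t) * 0) ≤
      t * Real.exp (Real.log p) + (1 - t) * Real.exp 0 := by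
    simpa [smul_eq_mul] using h
  rw [Real.exp_log hp0, Real.exp_zero] at h2
  calc Real.exp (Real.log p * t) = Real.exp (t * Real.log p + (1 - t) * 0) := by ring_nf
    _ ≤ t * p + (1 - t) * 1 := h2
    _ = 1 - t * (1 - p) := by ring

lemma aux_prod_range (p : ℝ) (hp0 : 0 < p) (hp1 : p ≤ 1) (m : ℕ) :
    p ^ ((1:ℝ)/p) ≤ ∏ i ∈ Finset.range m, (1 - (1 - p) ^ (i + 1)) := by
  set q := 1 - p with hq
  have hq0 : 0 ≤ q := by simp [hq]; linarith
  have hq1 : q < 1 := by simp [hq]; linarith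
  have key : ∀ i : ℕ, p ^ ((q ^ i : ℝ)) ≤ 1 - q ^ (i + 1) := by
    intro i
    have h1 : (0:ℝ) ≤ q ^ i := pow_nonneg hq0 i
    have h2 : (q:ℝ) ^ i ≤ 1 := pow_le_one₀ hq0 (by linarith)
    calc p ^ ((q:ℝ) ^ i) ≤ 1 - q ^ i * (1 - p) := aux_rpow_le p _ hp0 h1 h2
      _ = 1 - q ^ (i + 1) := by rw [pow_succ, ← hq]
  have hsum : (∑ i ∈ Finset.range m, q ^ i) ≤ 1 / p := by
    have h := geom_sum_mul q m
    rw [le_div_iff₀ hp0]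
    nlinarith [pow_nonneg hq0 m]
  calc p ^ ((1:ℝ)/p) ≤ p ^ (∑ i ∈ Finset.range m, q ^ i) :=
        Real.rpow_le_rpow_of_exponent_ge hp0 hp1 hsum
    _ = ∏ i ∈ Finset.range m, p ^ ((q ^ i : ℝ)) := by
        clear hsum
        induction m with
        | zero => simp
        | succ m ih => rw [Finset.sum_range_succ, Real.rpow_add hp0, ih, Finset.prod_range_succ]
    _ ≤ ∏ i ∈ Finset.range m, (1 - q ^ (i + 1)) := by
        refine Finset.prod_le_prod (fun i _ => Real.rpow_nonneg hp0.le _) (fun i _ => key i)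

lemma aux_prod_Icc (p : ℝ) (hp0 : 0 < p) (hp1 : p ≤ 1) (m : ℕ) :
    p ^ ((1:ℝ)/p) ≤ ∏ i ∈ Finset.Icc 1 m, (1 - (1 - p) ^ i) := by
  have : ∏ i ∈ Finset.Icc 1 m, (1 - (1 - p) ^ i)
      = ∏ i ∈ Finset.range m, (1 - (1 - p) ^ (i + 1)) := by
    induction m with
    | zero => simp
    | succ m ih =>
      rw [← Finset.insert_Icc_right_eq_Icc_add_one (by omega), Finset.prod_insert (by simp),
        Finset.prod_range_succ, ih]
      ring
  rw [this]; exact aux_prod_range p hp0 hp1 m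

section det

variable {n : ℕ} (adj : Fin n → Fin n → Bool) (X : Fin n → Bool) (s : ℕ → Fin n)

def seenF (s : ℕ → Fin n) (t : ℕ) : Finset (Fin n) := (Finset.Icc 1 t).image s

lemma seenF_succ (t : ℕ) : seenF s (t+1) = insert (s (t+1)) (seenF s t) := by
  rw [seenF, seenF, ← Finset.insert_Icc_right_eq_Icc_add_one (by omega), Finset.image_insert]

lemma seenF_mono {t t' : ℕ} (h : t ≤ t') : seenF s t ⊆ seenF s t' :=
  Finset.image_subset_image (Finset.Icc_subset_Icc_right h)

variable {s} in
lemma claimC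
    (H2 : ∀ r, 2 ≤ r → s r ∉ seenF s (r-1) →
      ∃ j ∈ Finset.Icc 1 (r-1), adj (s r) (s j) = true) :
    ∀ t, ∀ u ∈ seenF s t, u = s 1 ∨ ∃ j ∈ Finset.Icc 1 t, adj u (s j) = true := by
  intro t
  induction t with
  | zero => intro u hu; simp [seenF] at hu
  | succ t ih =>
    intro u hu
    rw [seenF_succ] at hu
    have widen : ∀ j, j ∈ Finset.Icc 1 t → j ∈ Finset.Icc 1 (t+1) := by
      intro j hj; rw [Finset.mem_Icc] at *; omega
    rcases Finset.mem_insert.1 hu with h | h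
    · by_cases hmem : s (t+1) ∈ seenF s t
      · subst h
        rcases ih _ hmem with h1 | ⟨j, hj, hadj⟩
        · exact Or.inl h1
        · exact Or.inr ⟨j, widen j hj, hadj⟩
      · rcases Nat.eq_zero_or_pos t with rfl | ht
        · exact Or.inl h
        · subst h
          obtain ⟨j, hj, hadj⟩ := H2 (t+1) (by omega) (by simpa using hmem)
          exact Or.inr ⟨j, widen j (by simpa using hj), hadj⟩
    · rcases ih _ h with h1 | ⟨j, hj, hadj⟩
      · exact Or.inl h1
      · exact Or.inr ⟨j, widen j hj, hadj⟩

variable {adj X s} in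
lemma dynLemma (b : Bool) (hX1 : X (s 1) = b)
    (H2 : ∀ r, 2 ≤ r → s r ∉ seenF s (r-1) →
      ∃ j ∈ Finset.Icc 1 (r-1), adj (s r) (s j) = true) :
    ∀ t v, majDynG n adj X s t v = if v ∈ seenF s t then some b else none := by
  intro t
  induction t with
  | zero => intro v; simp [majDynG, seenF]
  | succ t ih =>
    intro v
    set u := s (t+1) with hu
    have hmem : u ∈ seenF s (t+1) := by rw [seenF_succ]; exact Finset.mem_insert_self _ _
    by_cases hv : v = u
    · subst hv
      rw [majDynG, majStepG, Function.update_self, if_pos hmem]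
      -- compute the counters
      have hN : ∀ c : Bool,
          (Finset.univ.filter fun w : Fin n =>
            adj u w = true ∧ majDynG n adj X s t w = some c).card
          = if c = b then (Finset.univ.filter fun w : Fin n =>
              adj u w = true ∧ w ∈ seenF s t).card else 0 := by
        intro c
        by_cases hc : c = b
        · subst hc
          rw [if_pos rfl]
          congr 1
          apply Finset.filter_congr
          intro w _
          rw [ih w]
          by_cases hw : w ∈ seenF s t <;> simp [hw]
        · rw [if_neg hc]
          rw [Finset.card_eq_zero, Finset.filter_eq_empty_iff]
          intro w _
          rw [ih w]
          by_cases hw : w ∈ seenF s t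
          · simp only [if_pos hw]
            rintro ⟨-, h⟩
            exact hc (Option.some_injective _ h).symm
          · simp [hw]
      set Nb := (Finset.univ.filter fun w : Fin n =>
              adj u w = true ∧ w ∈ seenF s t).card with hNb
      -- key dichotomy
      have hkey : 0 < Nb ∨ u = s 1 := by
        by_cases hpos : 0 < Nb
        · exact Or.inl hpos
        · right
          have hempty : ∀ w, ¬ (adj u w = true ∧ w ∈ seenF s t) := by
            intro w hw
            apply hpos
            rw [hNb, Finset.card_pos]
            exact ⟨w, Finset.mem_filter.2 ⟨Finset.mem_univ w, hw⟩⟩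
          rcases Nat.eq_zero_or_pos t with rfl | ht
          · exact hu
          · by_cases hmem' : u ∈ seenF s t
            · rcases claimC adj H2 t u hmem' with h1 | ⟨j, hj, hadj⟩
              · exact h1
              · exact absurd ⟨hadj, Finset.mem_image_of_mem s hj⟩ (hempty (s j))
            · obtain ⟨j, hj, hadj⟩ := H2 (t+1) (by omega) (by simpa using hmem')
              rw [Nat.add_sub_cancel] at hj
              exact absurd ⟨hadj, Finset.mem_image_of_mem s hj⟩ (hempty (s j))
      -- conclude the announced value is b
      congr 1
      show (if (Finset.univ.filter fun w : Fin n =>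
            adj u w = true ∧ majDynG n adj X s t w = some false).card <
            (Finset.univ.filter fun w : Fin n =>
            adj u w = true ∧ majDynG n adj X s t w = some true).card then true
          else if _ < _ then false else X u) = b
      rw [hN true, hN false]
      cases b with
      | true =>
        rcases hkey with hpos | hu1
        · simp [hpos]
        · have hXu : X u = true := hu1 ▸ hX1
          rcases Nat.eq_zero_or_pos Nb with h0 | hpos
          · simp [h0, hXu]
          · simp [hpos]
      | false =>
        rcases hkey with hpos | hu1
        · simp [hpos]
        · have hXu : X u = false := hu1 ▸ hX1
          rcases Nat.eq_zero_or_pos Nb with h0 | hpos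
          · simp [h0, hXu]
          · simp [hpos]
    · rw [majDynG, majStepG, Function.update_of_ne hv, ih v, seenF_succ]
      by_cases hw : v ∈ seenF s t
      · simp [Finset.mem_insert, hw]
      · simp [Finset.mem_insert, hw, hv, ← hu]

variable {adj X s} in
lemma dynConverge (b : Bool) (hX1 : X (s 1) = b)
    (H2 : ∀ r, 2 ≤ r → s r ∉ seenF s (r-1) →
      ∃ j ∈ Finset.Icc 1 (r-1), adj (s r) (s j) = true)
    (hall : ∀ v, ∃ t, 1 ≤ t ∧ s t = v) :
    ∃ T, ∀ t, T ≤ t → ∀ v, majDynG n adj X s t v = some b := by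
  choose f hf1 hf2 using hall
  refine ⟨Finset.univ.sup f, fun t ht v => ?_⟩
  rw [dynLemma b hX1 H2]
  have : v ∈ seenF s t := Finset.mem_image.2 ⟨f v, Finset.mem_Icc.2
    ⟨hf1 v, le_trans (Finset.le_sup (Finset.mem_univ v)) ht⟩, hf2 v⟩
  simp [this]


end det

section group

variable {Ω : Type*} [MeasurableSpace Ω] {μ : Measure Ω} [IsProbabilityMeasure μ]
  {ι : Type*} {β : ι → Type*} [mβ : ∀ i, MeasurableSpace (β i)] {f : ∀ i, Ω → β i}

/-- A set is a "group event" over coordinates in `S`. -/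
def GrpEv (f : ∀ i, Ω → β i) (S : Finset ι) (A : Set Ω) : Prop :=
  ∃ M : Set (∀ i : S, β i), MeasurableSet M ∧ A = (fun ω (i : S) => f (i : ι) ω) ⁻¹' M

lemma GrpEv.measurableSet (hmeas : ∀ i, Measurable (f i)) {S : Finset ι} {A : Set Ω}
    (h : GrpEv f S A) : MeasurableSet A := by
  obtain ⟨M, hM, rfl⟩ := h
  have hg : Measurable (fun ω (i : S) => f (i : ι) ω) :=
    measurable_pi_lambda _ (fun i => hmeas (i : ι))
  exact hg hM

lemma grpEv_single (i0 : ι) (c : Set (β i0)) (hc : MeasurableSet c) :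
    GrpEv f ({i0} : Finset ι) (f i0 ⁻¹' c) := by
  refine ⟨(fun x => x ⟨i0, Finset.mem_singleton_self i0⟩) ⁻¹' c,
    (measurable_pi_apply _) hc, rfl⟩

lemma grpEv_univ (S : Finset ι) : GrpEv f S Set.univ :=
  ⟨Set.univ, MeasurableSet.univ, rfl⟩

lemma grpEv_mono {S T : Finset ι} (hST : S ⊆ T) {A : Set Ω} (h : GrpEv f S A) :
    GrpEv f T A := by
  obtain ⟨M, hM, rfl⟩ := h
  refine ⟨(fun (x : ∀ i : T, β i) (i : S) => x ⟨i.1, hST i.2⟩) ⁻¹' M,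
    (measurable_pi_lambda _ (fun i => measurable_pi_apply _)) hM, rfl⟩

lemma grpEv_inter {S : Finset ι} {A B : Set Ω} (hA : GrpEv f S A) (hB : GrpEv f S B) :
    GrpEv f S (A ∩ B) := by
  obtain ⟨M, hM, rfl⟩ := hA
  obtain ⟨N, hN, rfl⟩ := hB
  exact ⟨M ∩ N, hM.inter hN, rfl⟩

lemma groupFactor (hind : ProbabilityTheory.iIndepFun (m := mβ) f μ) (hmeas : ∀ i, Measurable (f i))
    {κ : Type*} (S : κ → Finset ι) (A : κ → Set Ω)
    (hdisj : ∀ k l, k ≠ l → Disjoint (S k) (S l))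
    (hA : ∀ k, GrpEv f (S k) (A k)) :
    ∀ u : Finset κ, μ (⋂ k ∈ u, A k) = ∏ k ∈ u, μ (A k) := by
  classical
  choose M hM hAM using hA
  intro u
  induction u using Finset.induction_on with
  | empty => simp
  | insert a u ha ih =>
    rw [Finset.set_biInter_insert, Finset.prod_insert ha]
    set U : Finset ι := u.biUnion S with hU
    have hSU : Disjoint (S a) U := by
      rw [hU, Finset.disjoint_biUnion_right]
      exact fun k hk => hdisj a k (by rintro rfl; exact ha hk)
    have hIF := ProbabilityTheory.iIndepFun.indepFun_finset (S a) U hSU hind hmeas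
    have hsub : ∀ k, k ∈ u → ∀ i : ι, i ∈ S k → i ∈ U :=
      fun k hk i hi => Finset.mem_biUnion.2 ⟨k, hk, hi⟩
    set N : Set (∀ i : U, β i) :=
      ⋂ k : {x // x ∈ u}, (fun (x : ∀ i : U, β i) (i : S k.1) =>
        x ⟨i.1, hsub k.1 k.2 i.1 i.2⟩) ⁻¹' (M k.1) with hN
    have hNmeas : MeasurableSet N := by
      refine MeasurableSet.iInter (fun k => ?_)
      exact (measurable_pi_lambda _ (fun i => measurable_pi_apply _)) (hM k.1)
    have hrew : ⋂ k ∈ u, A k = (fun ω (i : U) => f (i : ι) ω) ⁻¹' N := by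
      ext ω
      simp only [Set.mem_iInter, Set.mem_preimage, hN]
      constructor
      · intro h k
        have := h k.1 k.2
        rw [hAM k.1] at this
        exact this
      · intro h k hk
        rw [hAM k]
        exact h ⟨k, hk⟩
    have hmain : μ (A a ∩ ⋂ k ∈ u, A k) = μ (A a) * μ (⋂ k ∈ u, A k) := by
      rw [hrew, hAM a]
      exact hIF.measure_inter_preimage_eq_mul _ _ (hM a) hNmeas
    rw [hmain, ih]

end group

-- application part

def prevI {n T : ℕ} (σ : Fin T → Fin n) (t : Fin T) : Finset (Fin n) :=
  (Finset.univ.filter (fun t' => t' < t)).image σ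

def newI {n T : ℕ} (σ : Fin T → Fin n) (t : Fin T) : Prop :=
  0 < t.1 ∧ σ t ∉ prevI σ t

instance {n T : ℕ} (σ : Fin T → Fin n) (t : Fin T) : Decidable (newI σ t) := by
  unfold newI; infer_instance

lemma mem_prevI {n T : ℕ} (σ : Fin T → Fin n) {t t' : Fin T} (h : t' < t) :
    σ t' ∈ prevI σ t :=
  Finset.mem_image_of_mem σ (Finset.mem_filter.2 ⟨Finset.mem_univ _, h⟩)

lemma prevI_mono {n T : ℕ} (σ : Fin T → Fin n) {t t' : Fin T} (h : t ≤ t') :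
    prevI σ t ⊆ prevI σ t' := by
  intro a ha
  obtain ⟨t'', ht'', rfl⟩ := Finset.mem_image.1 ha
  rw [Finset.mem_filter] at ht''
  exact mem_prevI σ (lt_of_lt_of_le ht''.2 h)

section events
variable {n : ℕ} {Ω : Type*} [MeasurableSpace Ω]

def SevD (sel : ℕ → Ω → Fin n) (T : ℕ) (σ : Fin T → Fin n) : Set Ω :=
  ⋂ t : Fin T, sel (t.1+1) ⁻¹' {σ t}

def BevD (E : Sym2 (Fin n) → Ω → Bool) (u0 : Fin n) (P : Finset (Fin n)) : Set Ω :=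
  ⋃ v ∈ P, E s(u0, v) ⁻¹' {true}

def GevD (E : Sym2 (Fin n) → Ω → Bool) (X : Fin n → Ω → Bool) (b : Bool)
    (T : ℕ) (σ : Fin T → Fin n) : Set Ω :=
  (⋂ h : 0 < T, X (σ ⟨0, h⟩) ⁻¹' {b}) ∩
    ⋂ t : Fin T, (if newI σ t then BevD E (σ t) (prevI σ t) else Set.univ)

end events

section probpart
variable {Ω : Type*} [MeasurableSpace Ω] (μ : Measure Ω) [IsProbabilityMeasure μ]
  (n : ℕ) (E : Sym2 (Fin n) → Ω → Bool) (sel : ℕ → Ω → Fin n) (X : Fin n → Ω → Bool)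

lemma hFmeasG (hEmeas : ∀ e, Measurable (E e)) (hselmeas : ∀ t, Measurable (sel t))
    (hXmeas : ∀ v, Measurable (X v)) : ∀ i, Measurable (sigFunG n E sel X i) := by
  rintro (e | t | v)
  exacts [hEmeas e, hselmeas t, hXmeas v]

lemma grpEv_Bev (u0 : Fin n) (P : Finset (Fin n)) :
    GrpEv (sigFunG n E sel X) (P.image (fun v => (Sum.inl s(u0, v) : Sym2 (Fin n) ⊕ ℕ ⊕ Fin n)))
      (BevD E u0 P) := by
  classical
  refine ⟨⋃ v : P, (fun x => x ⟨Sum.inl s(u0, v.1), Finset.mem_image_of_mem _ v.2⟩) ⁻¹' {true},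
    ?_, ?_⟩
  · exact MeasurableSet.iUnion (fun v => (measurable_pi_apply _) trivial)
  · ext ω
    simp only [BevD, Set.mem_iUnion, Set.mem_preimage, Set.mem_singleton_iff]
    constructor
    · rintro ⟨v, hv, h⟩; exact ⟨⟨v, hv⟩, h⟩
    · rintro ⟨⟨v, hv⟩, h⟩; exact ⟨v, hv, h⟩

lemma grpEv_sel (t : ℕ) (a : Fin n) :
    GrpEv (sigFunG n E sel X)
      ({Sum.inr (Sum.inl t)} : Finset (Sym2 (Fin n) ⊕ ℕ ⊕ Fin n)) (sel t ⁻¹' {a}) :=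
  grpEv_single (f := sigFunG n E sel X) (Sum.inr (Sum.inl t))
    (show Set (sigTypeG n (Sum.inr (Sum.inl t))) from {x | x = a}) trivial

lemma grpEv_X (v : Fin n) (b : Bool) :
    GrpEv (sigFunG n E sel X)
      ({Sum.inr (Sum.inr v)} : Finset (Sym2 (Fin n) ⊕ ℕ ⊕ Fin n)) (X v ⁻¹' {b}) :=
  grpEv_single (f := sigFunG n E sel X) (Sum.inr (Sum.inr v))
    (show Set (sigTypeG n (Sum.inr (Sum.inr v))) from {x | x = b}) trivial

lemma grpEv_E (e : Sym2 (Fin n)) (b : Bool) :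
    GrpEv (sigFunG n E sel X)
      ({Sum.inl e} : Finset (Sym2 (Fin n) ⊕ ℕ ⊕ Fin n)) (E e ⁻¹' {b}) :=
  grpEv_single (f := sigFunG n E sel X) (Sum.inl e)
    (show Set (sigTypeG n (Sum.inl e)) from {x | x = b}) trivial

lemma edge_inj {n : ℕ} (u0 v v' : Fin n) (h : s(u0, v) = s(u0, v')) : v = v' := by
  rcases Sym2.eq_iff.1 h with ⟨-, h2⟩ | ⟨h1, h2⟩
  exacts [h2, h2.trans h1]

variable {p : ℝ}

lemma ofReal_one_sub (hp0 : 0 ≤ p) : (1 : ℝ≥0∞) - ENNReal.ofReal p = ENNReal.ofReal (1 - p) := by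
  rw [ENNReal.ofReal_sub _ hp0, ENNReal.ofReal_one]

lemma mu_Bev
    (hEmeas : ∀ e, Measurable (E e)) (hselmeas : ∀ t, Measurable (sel t))
    (hXmeas : ∀ v, Measurable (X v))
    (hind : ProbabilityTheory.iIndepFun (m := sigTypeGMeasurable n) (sigFunG n E sel X) μ)
    (hp0 : 0 < p) (hp1 : p ≤ 1)
    (hE : ∀ e : Sym2 (Fin n), ¬ e.IsDiag → μ {ω | E e ω = true} = ENNReal.ofReal p)
    (u0 : Fin n) (P : Finset (Fin n)) (hu0 : u0 ∉ P) :
    μ (BevD E u0 P) = ENNReal.ofReal (1 - (1 - p) ^ P.card) := by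
  classical
  have hFmeas := hFmeasG n E sel X hEmeas hselmeas hXmeas
  have hmeasB : MeasurableSet (BevD E u0 P) :=
    (grpEv_Bev n E sel X u0 P).measurableSet hFmeas
  have hEfalse : ∀ v ∈ P, μ (E s(u0, v) ⁻¹' {false}) = ENNReal.ofReal (1 - p) := by
    intro v hv
    have hne : ¬ (s(u0, v)).IsDiag := by
      rw [Sym2.mk_isDiag_iff]
      rintro rfl; exact hu0 hv
    have h1 : (E s(u0, v) ⁻¹' {false}) = (E s(u0, v) ⁻¹' {true})ᶜ := by
      ext ω; simp [Bool.not_eq_true]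
    have h2 : μ (E s(u0, v) ⁻¹' {true}) = ENNReal.ofReal p := hE _ hne
    rw [h1, measure_compl ((hEmeas _) trivial) (measure_ne_top μ _), measure_univ, h2,
      ofReal_one_sub hp0.le]
  have hcompl : (BevD E u0 P)ᶜ = ⋂ v ∈ P, E s(u0, v) ⁻¹' {false} := by
    ext ω
    simp [BevD, Bool.not_eq_true]
  have hval : μ ((BevD E u0 P)ᶜ) = ENNReal.ofReal ((1 - p) ^ P.card) := by
    rw [hcompl,
      groupFactor hind hFmeas
        (fun v : Fin n => ({Sum.inl s(u0, v)} : Finset (Sym2 (Fin n) ⊕ ℕ ⊕ Fin n)))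
        (fun v => E s(u0, v) ⁻¹' {false})
        (fun v v' hvv' => by
          simp only [Finset.disjoint_singleton]
          intro hs
          exact hvv' (edge_inj u0 v v' (Sum.inl.inj hs)))
        (fun v => grpEv_E n E sel X s(u0, v) false) P]
    rw [Finset.prod_congr rfl hEfalse, Finset.prod_const,
      ← ENNReal.ofReal_pow (by linarith : (0:ℝ) ≤ 1 - p)]
  have hle : μ (BevD E u0 P) ≤ 1 := prob_le_one
  calc μ (BevD E u0 P) = 1 - (1 - μ (BevD E u0 P)) :=
        (ENNReal.sub_sub_cancel ENNReal.one_ne_top hle).symm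
    _ = 1 - μ ((BevD E u0 P)ᶜ) := by
        rw [measure_compl hmeasB (measure_ne_top μ _), measure_univ]
    _ = 1 - ENNReal.ofReal ((1 - p) ^ P.card) := by rw [hval]
    _ = ENNReal.ofReal (1 - (1 - p) ^ P.card) :=
        ofReal_one_sub (pow_nonneg (by linarith) _)

lemma mu_Sev
    (hEmeas : ∀ e, Measurable (E e)) (hselmeas : ∀ t, Measurable (sel t))
    (hXmeas : ∀ v, Measurable (X v))
    (hind : ProbabilityTheory.iIndepFun (m := sigTypeGMeasurable n) (sigFunG n E sel X) μ)
    (T : ℕ) (σ : Fin T → Fin n) :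
    μ (SevD sel T σ) = ∏ t : Fin T, μ (sel (t.1+1) ⁻¹' {σ t}) := by
  classical
  have hFmeas := hFmeasG n E sel X hEmeas hselmeas hXmeas
  have h := groupFactor hind hFmeas
    (fun t : Fin T => ({Sum.inr (Sum.inl (t.1+1))} : Finset (Sym2 (Fin n) ⊕ ℕ ⊕ Fin n)))
    (fun t => sel (t.1+1) ⁻¹' {σ t})
    (fun t t' htt' => by
      simp only [Finset.disjoint_singleton]
      intro hs
      apply htt'
      have := Sum.inl.inj (Sum.inr.inj hs)
      exact Fin.ext (by omega))
    (fun t => grpEv_sel n E sel X (t.1+1) (σ t)) Finset.univ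
  rw [← h]
  congr 1
  ext ω
  simp [SevD]

lemma edge_groups_disj_aux {n T : ℕ} (σ : Fin T → Fin n) {t t' : Fin T} (hlt : t < t')
    (hn2 : newI σ t') :
    Disjoint ((prevI σ t).image (fun v => (Sum.inl s(σ t, v) : Sym2 (Fin n) ⊕ ℕ ⊕ Fin n)))
      ((prevI σ t').image (fun v => (Sum.inl s(σ t', v) : Sym2 (Fin n) ⊕ ℕ ⊕ Fin n))) := by
  rw [Finset.disjoint_left]
  rintro a ha ha'
  obtain ⟨v, hv, rfl⟩ := Finset.mem_image.1 ha
  obtain ⟨v', hv', he⟩ := Finset.mem_image.1 ha'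
  have he' : s(σ t', v') = s(σ t, v) := Sum.inl.inj he
  rcases Sym2.eq_iff.1 he' with ⟨h1, h2⟩ | ⟨h1, h2⟩
  · exact hn2.2 (h1 ▸ mem_prevI σ hlt)
  · exact hn2.2 (h1 ▸ prevI_mono σ hlt.le hv)

lemma edge_groups_disj {n T : ℕ} (σ : Fin T → Fin n) {t t' : Fin T} (h : t ≠ t')
    (hn1 : newI σ t) (hn2 : newI σ t') :
    Disjoint ((prevI σ t).image (fun v => (Sum.inl s(σ t, v) : Sym2 (Fin n) ⊕ ℕ ⊕ Fin n)))
      ((prevI σ t').image (fun v => (Sum.inl s(σ t', v) : Sym2 (Fin n) ⊕ ℕ ⊕ Fin n))) := by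
  rcases lt_or_gt_of_ne h with hlt | hlt
  · exact edge_groups_disj_aux σ hlt hn2
  · exact (edge_groups_disj_aux σ hlt hn1).symm

lemma mu_piece
    (hEmeas : ∀ e, Measurable (E e)) (hselmeas : ∀ t, Measurable (sel t))
    (hXmeas : ∀ v, Measurable (X v))
    (hind : ProbabilityTheory.iIndepFun (m := sigTypeGMeasurable n) (sigFunG n E sel X) μ)
    (hp0 : 0 < p) (hp1 : p ≤ 1)
    (hE : ∀ e : Sym2 (Fin n), ¬ e.IsDiag → μ {ω | E e ω = true} = ENNReal.ofReal p)
    (b : Bool) (x : ℝ) (hx0 : 0 ≤ x)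
    (hXb : ∀ v, μ (X v ⁻¹' {b}) = ENNReal.ofReal x)
    (T : ℕ) (hT : 0 < T) (σ : Fin T → Fin n) :
    μ (SevD sel T σ) * ENNReal.ofReal (x * p ^ ((1:ℝ)/p))
      ≤ μ (SevD sel T σ ∩ GevD E X b T σ) := by
  classical
  have hFmeas := hFmeasG n E sel X hEmeas hselmeas hXmeas
  set z : Fin T := ⟨0, hT⟩ with hz
  set SS : Option (Fin T ⊕ Fin T) → Finset (Sym2 (Fin n) ⊕ ℕ ⊕ Fin n) := fun k =>
    Option.elim k ({Sum.inr (Sum.inr (σ z))})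
      (Sum.elim (fun t => {Sum.inr (Sum.inl (t.1+1))})
        (fun t => if newI σ t then (prevI σ t).image (fun v => Sum.inl s(σ t, v)) else ∅))
    with hSS
  set AA : Option (Fin T ⊕ Fin T) → Set Ω := fun k =>
    Option.elim k (X (σ z) ⁻¹' {b})
      (Sum.elim (fun t => sel (t.1+1) ⁻¹' {σ t})
        (fun t => if newI σ t then BevD E (σ t) (prevI σ t) else Set.univ))
    with hAA
  have hdisj : ∀ k l, k ≠ l → Disjoint (SS k) (SS l) := by
    rintro (_ | (t | t)) (_ | (t' | t')) hkl <;>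
      simp only [hSS, Option.elim, Sum.elim] <;>
      [skip; skip; skip; skip; skip; skip; skip; skip; skip]
    · exact absurd rfl hkl
    · simp
    · split_ifs
      · rw [Finset.disjoint_left]
        rintro a ha ha'
        obtain ⟨v, hv, rfl⟩ := Finset.mem_image.1 ha'
        simp at ha
      · simp
    · simp
    · rw [Finset.disjoint_singleton]
      intro hs
      have h1 := Sum.inl.inj (Sum.inr.inj hs)
      have ht : t = t' := Fin.ext (by omega)
      exact hkl (by rw [ht])
    · split_ifs
      · rw [Finset.disjoint_left]
        rintro a ha ha'
        obtain ⟨v, hv, rfl⟩ := Finset.mem_image.1 ha'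
        simp at ha
      · simp
    · split_ifs
      · rw [Finset.disjoint_left]
        rintro a ha ha'
        obtain ⟨v, hv, rfl⟩ := Finset.mem_image.1 ha
        simp at ha'
      · simp
    · split_ifs
      · rw [Finset.disjoint_left]
        rintro a ha ha'
        obtain ⟨v, hv, rfl⟩ := Finset.mem_image.1 ha
        simp at ha'
      · simp
    · split_ifs with h1 h2
      · exact edge_groups_disj σ (fun hc => hkl (by rw [hc])) h1 h2
      all_goals simp
  have hAk : ∀ k, GrpEv (sigFunG n E sel X) (SS k) (AA k) := by
    rintro (_ | (t | t))
    · exact grpEv_X n E sel X (σ z) b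
    · exact grpEv_sel n E sel X (t.1+1) (σ t)
    · show GrpEv _ (if newI σ t then _ else ∅) (if newI σ t then _ else Set.univ)
      split_ifs with hnew
      · exact grpEv_Bev n E sel X (σ t) (prevI σ t)
      · exact ⟨Set.univ, MeasurableSet.univ, rfl⟩
  have hfac := groupFactor hind hFmeas SS AA hdisj hAk Finset.univ
  have hinter : ⋂ k ∈ Finset.univ, AA k = SevD sel T σ ∩ GevD E X b T σ := by
    have huniv : ⋂ k ∈ (Finset.univ : Finset (Option (Fin T ⊕ Fin T))), AA k = ⋂ k, AA k := by
      simp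
    rw [huniv]
    ext ω
    simp only [Set.mem_iInter, Set.mem_inter_iff, SevD, GevD]
    constructor
    · intro h
      exact ⟨fun t => h (some (Sum.inl t)), fun _ => h none, fun t => h (some (Sum.inr t))⟩
    · rintro ⟨h1, h2, h3⟩ (_ | (t | t))
      · exact h2 hT
      · exact h1 t
      · exact h3 t
  have hprod : ∏ k ∈ Finset.univ, μ (AA k)
      = μ (AA none) * ((∏ t : Fin T, μ (AA (some (Sum.inl t))))
        * ∏ t : Fin T, μ (AA (some (Sum.inr t)))) := by
    rw [Fintype.prod_option]
    congr 1
    rw [Fintype.prod_sum_type]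
  -- values
  have hXval : μ (AA none) = ENNReal.ofReal x := hXb (σ z)
  have hselval : ∏ t : Fin T, μ (AA (some (Sum.inl t))) = μ (SevD sel T σ) :=
    (mu_Sev μ n E sel X hEmeas hselmeas hXmeas hind T σ).symm
  -- edge product bound
  set c : Fin T → ℕ := fun t => (prevI σ t).card with hc
  have hq0 : (0:ℝ) ≤ 1 - p := by linarith
  have hfactor0 : ∀ i : ℕ, 0 ≤ 1 - (1-p)^i := fun i => by
    have := pow_le_one₀ hq0 (by linarith : (1:ℝ) - p ≤ 1) (n := i)
    linarith
  have hfactor1 : ∀ i : ℕ, 1 - (1-p)^i ≤ 1 := fun i => by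
    have := pow_nonneg hq0 i
    linarith
  have hedgeval : ∀ t : Fin T, μ (AA (some (Sum.inr t)))
      = if newI σ t then ENNReal.ofReal (1 - (1-p)^(c t)) else 1 := by
    intro t
    show μ (if newI σ t then BevD E (σ t) (prevI σ t) else Set.univ) = _
    split_ifs with hnew
    · exact mu_Bev μ n E sel X hEmeas hselmeas hXmeas hind hp0 hp1 hE (σ t) (prevI σ t) hnew.2
    · exact measure_univ
  have hedgeprod : ∏ t : Fin T, μ (AA (some (Sum.inr t)))
      = ENNReal.ofReal (∏ t ∈ Finset.univ.filter (newI σ), (1 - (1-p)^(c t))) := by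
    rw [ENNReal.ofReal_prod_of_nonneg (fun t _ => hfactor0 (c t)), Finset.prod_filter]
    refine Finset.prod_congr rfl (fun t _ => ?_)
    exact hedgeval t
  have hreal : p ^ ((1:ℝ)/p) ≤ ∏ t ∈ Finset.univ.filter (newI σ), (1 - (1-p)^(c t)) := by
    set N := Finset.univ.filter (newI σ) with hN
    have hmemN : ∀ t, t ∈ N ↔ newI σ t := by
      intro t; rw [hN, Finset.mem_filter]; simp
    have hlt : ∀ t ∈ N, ∀ t' ∈ N, t < t' → c t < c t' := by
      intro t ht t' ht' hlt
      apply Finset.card_lt_card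
      rw [Finset.ssubset_def]
      refine ⟨prevI_mono σ hlt.le, fun hsub => ?_⟩
      exact ((hmemN t).1 ht).2 (hsub (mem_prevI σ hlt))
    have hinj : ∀ a ∈ N, ∀ b ∈ N, c a = c b → a = b := by
      intro a ha b hb hab
      rcases lt_trichotomy a b with h | h | h
      · exact absurd hab (Nat.ne_of_lt (hlt a ha b hb h))
      · exact h
      · exact absurd hab.symm (Nat.ne_of_lt (hlt b hb a ha h))
    have himg : ∏ t ∈ N, (1 - (1-p)^(c t)) = ∏ i ∈ N.image c, (1 - (1-p)^i) :=
      (Finset.prod_image (f := fun i : ℕ => 1 - (1-p)^i) (g := c) hinj).symm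
    have hDsub : N.image c ⊆ Finset.Icc 1 T := by
      intro i hi
      obtain ⟨t, ht, rfl⟩ := Finset.mem_image.1 hi
      rw [Finset.mem_Icc]
      constructor
      · have hzt : z < t := by
          rw [Fin.lt_def]
          exact ((hmemN t).1 ht).1
        have : 0 < c t := Finset.card_pos.2 ⟨σ z, mem_prevI σ hzt⟩
        omega
      · calc c t ≤ (Finset.univ.filter (fun t' => t' < t)).card := Finset.card_image_le
          _ ≤ (Finset.univ : Finset (Fin T)).card := Finset.card_filter_le _ _
          _ = T := by simp
    have hIccD : ∏ i ∈ Finset.Icc 1 T, (1-(1-p)^i) ≤ ∏ i ∈ N.image c, (1-(1-p)^i) := by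
      rw [← Finset.prod_sdiff hDsub]
      have h1 : ∏ i ∈ (Finset.Icc 1 T) \ (N.image c), (1-(1-p)^i) ≤ 1 :=
        Finset.prod_le_one (fun i _ => hfactor0 i) (fun i _ => hfactor1 i)
      have h2 : (0:ℝ) ≤ ∏ i ∈ N.image c, (1-(1-p)^i) :=
        Finset.prod_nonneg (fun i _ => hfactor0 i)
      calc (∏ i ∈ (Finset.Icc 1 T) \ (N.image c), (1-(1-p)^i)) * ∏ i ∈ N.image c, (1-(1-p)^i)
          ≤ 1 * ∏ i ∈ N.image c, (1-(1-p)^i) := mul_le_mul_of_nonneg_right h1 h2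
        _ = ∏ i ∈ N.image c, (1-(1-p)^i) := one_mul _
    calc p ^ ((1:ℝ)/p) ≤ ∏ i ∈ Finset.Icc 1 T, (1-(1-p)^i) := aux_prod_Icc p hp0 hp1 T
      _ ≤ ∏ i ∈ N.image c, (1-(1-p)^i) := hIccD
      _ = ∏ t ∈ N, (1 - (1-p)^(c t)) := himg.symm
  have hμeq : μ (SevD sel T σ ∩ GevD E X b T σ)
      = ENNReal.ofReal x * (μ (SevD sel T σ)
        * ENNReal.ofReal (∏ t ∈ Finset.univ.filter (newI σ), (1 - (1-p)^(c t)))) := by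
    rw [← hinter, hfac, hprod, hselval, hXval, hedgeprod]
  rw [hμeq, ENNReal.ofReal_mul hx0]
  calc μ (SevD sel T σ) * (ENNReal.ofReal x * ENNReal.ofReal (p ^ ((1:ℝ)/p)))
      ≤ μ (SevD sel T σ) * (ENNReal.ofReal x
        * ENNReal.ofReal (∏ t ∈ Finset.univ.filter (newI σ), (1 - (1-p)^(c t)))) := by
        exact mul_le_mul_right (mul_le_mul_right (ENNReal.ofReal_le_ofReal hreal) _) _
    _ = ENNReal.ofReal x * (μ (SevD sel T σ)
        * ENNReal.ofReal (∏ t ∈ Finset.univ.filter (newI σ), (1 - (1-p)^(c t)))) := by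
        ring
end probpart

section assembly
variable {Ω : Type*} [MeasurableSpace Ω] (μ : Measure Ω) [IsProbabilityMeasure μ]
  (n : ℕ) (E : Sym2 (Fin n) → Ω → Bool) (sel : ℕ → Ω → Fin n) (X : Fin n → Ω → Bool)
  {p : ℝ}

def CondD (n : ℕ) (j : (T : ℕ) × (Fin T → Fin n)) : Prop :=
  (∀ v, ∃ t : Fin j.1, j.2 t = v) ∧ ¬(∀ v, ∃ t : Fin j.1, t.1 + 1 < j.1 ∧ j.2 t = v)

lemma det_incl (b : Bool) (T : ℕ) (hT : 0 < T) (σ : Fin T → Fin n)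
    (hsurj : ∀ v, ∃ t : Fin T, σ t = v) (ω : Ω)
    (hS : ω ∈ SevD sel T σ) (hG : ω ∈ GevD E X b T σ) :
    ∃ T', ∀ t, T' ≤ t → ∀ v,
      majDynG n (fun u u' => decide (u ≠ u') && E s(u, u') ω)
        (fun v' => X v' ω) (fun i => sel i ω) t v = some b := by
  have hSev : ∀ t : Fin T, sel (t.1+1) ω = σ t := by
    intro t
    have := Set.mem_iInter.1 hS t
    simpa using this
  have hGX : X (σ ⟨0, hT⟩) ω = b := by
    have := Set.mem_iInter.1 hG.1 hT
    simpa using this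
  have hGB : ∀ t : Fin T, newI σ t → ∃ v ∈ prevI σ t, E s(σ t, v) ω = true := by
    intro t hnew
    have := Set.mem_iInter.1 hG.2 t
    rw [if_pos hnew] at this
    simpa [BevD] using this
  set s : ℕ → Fin n := fun i => sel i ω with hs
  have hX1 : (fun v' => X v' ω) (s 1) = b := by
    have h1 : s 1 = σ ⟨0, hT⟩ := hSev ⟨0, hT⟩
    rw [h1]; exact hGX
  have H2 : ∀ r, 2 ≤ r → s r ∉ seenF s (r-1) →
      ∃ j ∈ Finset.Icc 1 (r-1), ((fun u u' => decide (u ≠ u') && E s(u, u') ω) (s r) (s j)) = true := by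
    intro r hr hfresh
    by_cases hrT : r ≤ T
    · set t : Fin T := ⟨r-1, by omega⟩ with ht
      have hselr : s r = σ t := by
        have := hSev t
        rw [show t.1 + 1 = r from by simp [ht]; omega] at this
        exact this
      have hnew : newI σ t := by
        refine ⟨by simp [ht]; omega, fun hmem => ?_⟩
        obtain ⟨t'', ht''mem, ht''⟩ := Finset.mem_image.1 hmem
        rw [Finset.mem_filter] at ht''mem
        apply hfresh
        refine Finset.mem_image.2 ⟨t''.1+1, Finset.mem_Icc.2 ⟨by omega, ?_⟩, ?_⟩
        · have := ht''mem.2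
          rw [Fin.lt_def] at this
          simp [ht] at this ⊢
          omega
        · rw [show s (t''.1+1) = σ t'' from hSev t'', ht'', ← hselr]
      obtain ⟨v, hv, hEv⟩ := hGB t hnew
      obtain ⟨t'', ht''mem, rfl⟩ := Finset.mem_image.1 hv
      rw [Finset.mem_filter] at ht''mem
      have hjIcc : t''.1 + 1 ∈ Finset.Icc 1 (r-1) := by
        rw [Finset.mem_Icc]
        have := ht''mem.2
        rw [Fin.lt_def] at this
        simp [ht] at this
        omega
      refine ⟨t''.1+1, hjIcc, ?_⟩
      have h1 : s (t''.1+1) = σ t'' := hSev t''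
      have hne : s r ≠ s (t''.1+1) := by
        intro hc
        exact hfresh (Finset.mem_image.2 ⟨t''.1+1, hjIcc, hc.symm⟩)
      show (decide (s r ≠ s (t''.1+1)) && E s(s r, s (t''.1+1)) ω) = true
      rw [Bool.and_eq_true, decide_eq_true_eq]
      exact ⟨hne, by rw [hselr, h1]; exact hEv⟩
    · exfalso
      obtain ⟨tf, htf⟩ := hsurj (s r)
      apply hfresh
      refine Finset.mem_image.2 ⟨tf.1+1, Finset.mem_Icc.2 ⟨by omega, by have := tf.2; omega⟩, ?_⟩
      rw [show s (tf.1+1) = σ tf from hSev tf, htf]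
  have hall : ∀ v, ∃ t, 1 ≤ t ∧ s t = v := by
    intro v
    obtain ⟨tf, htf⟩ := hsurj v
    exact ⟨tf.1+1, by omega, by rw [show s (tf.1+1) = σ tf from hSev tf, htf]⟩
  exact dynConverge b hX1 H2 hall

lemma Sev_mem_iff (T : ℕ) (σ : Fin T → Fin n) (ω : Ω) :
    ω ∈ SevD sel T σ ↔ ∀ t : Fin T, sel (t.1+1) ω = σ t := by
  simp [SevD]

lemma Sev_disj_aux {T T' : ℕ} {σ : Fin T → Fin n} {σ' : Fin T' → Fin n}
    (hj : CondD n ⟨T, σ⟩) (hj' : CondD n ⟨T', σ'⟩)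
    (hle : T ≤ T') (ω : Ω) (hω : ω ∈ SevD sel T σ) (hω' : ω ∈ SevD sel T' σ') :
    (⟨T, σ⟩ : (T : ℕ) × (Fin T → Fin n)) = ⟨T', σ'⟩ := by
  have h1 := (Sev_mem_iff n sel T σ ω).1 hω
  have h2 := (Sev_mem_iff n sel T' σ' ω).1 hω'
  rcases eq_or_lt_of_le hle with rfl | hlt
  · have : σ = σ' := by
      funext t
      rw [← h1 t, ← h2 t]
    rw [this]
  · exfalso
    apply hj'.2
    intro v
    obtain ⟨t, htv⟩ := hj.1 v
    have htT : t.1 < T := t.2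
    show ∃ t : Fin T', t.1 + 1 < T' ∧ σ' t = v
    refine ⟨⟨t.1, by omega⟩, by simp only []; omega, ?_⟩
    have h3 := h2 ⟨t.1, by omega⟩
    simp only at h3
    rw [← h3, h1 t]
    exact htv

lemma Sev_measurable (hselmeas : ∀ t, Measurable (sel t)) (T : ℕ) (σ : Fin T → Fin n) :
    MeasurableSet (SevD sel T σ) :=
  MeasurableSet.iInter (fun t => (hselmeas (t.1+1)) trivial)

lemma Gev_measurable (hEmeas : ∀ e, Measurable (E e)) (hXmeas : ∀ v, Measurable (X v))
    (b : Bool) (T : ℕ) (σ : Fin T → Fin n) :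
    MeasurableSet (GevD E X b T σ) := by
  refine MeasurableSet.inter (MeasurableSet.iInter (fun h => (hXmeas _) trivial))
    (MeasurableSet.iInter (fun t => ?_))
  split_ifs with hnew
  · exact Set.Finite.measurableSet_biUnion (Finset.finite_toSet _)
      (fun v _ => (hEmeas _) trivial)
  · exact MeasurableSet.univ

lemma mu_AS (hn : 1 ≤ n)
    (hEmeas : ∀ e, Measurable (E e)) (hselmeas : ∀ t, Measurable (sel t))
    (hXmeas : ∀ v, Measurable (X v))
    (hind : ProbabilityTheory.iIndepFun (m := sigTypeGMeasurable n) (sigFunG n E sel X) μ)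
    (hunif : ∀ t, 1 ≤ t → ∀ x : Fin n, μ {ω | sel t ω = x} = (n : ℝ≥0∞)⁻¹) :
    μ {ω | ∀ v : Fin n, ∃ t, 1 ≤ t ∧ sel t ω = v} = 1 := by
  classical
  have hFmeas := hFmeasG n E sel X hEmeas hselmeas hXmeas
  set r : ℝ≥0∞ := 1 - (n : ℝ≥0∞)⁻¹ with hr
  have hrlt : r < 1 := by
    refine ENNReal.sub_lt_self ENNReal.one_ne_top one_ne_zero ?_
    simp [ENNReal.inv_ne_zero]
  have hselc : ∀ t, 1 ≤ t → ∀ v : Fin n, μ (sel t ⁻¹' {v}ᶜ) = r := by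
    intro t ht v
    have h1 : sel t ⁻¹' {v}ᶜ = (sel t ⁻¹' {v})ᶜ := rfl
    rw [h1, measure_compl ((hselmeas t) trivial) (measure_ne_top μ _), measure_univ]
    have : μ (sel t ⁻¹' {v}) = (n : ℝ≥0∞)⁻¹ := hunif t ht v
    rw [this]
  have hNv : ∀ v : Fin n, μ {ω | ∀ t, 1 ≤ t → sel t ω ≠ v} = 0 := by
    intro v
    have hbound : ∀ m : ℕ, μ {ω | ∀ t, 1 ≤ t → sel t ω ≠ v} ≤ r ^ m := by
      intro m
      have hsub : {ω | ∀ t, 1 ≤ t → sel t ω ≠ v} ⊆ ⋂ t ∈ Finset.Icc 1 m, sel t ⁻¹' {v}ᶜ := by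
        intro ω hω
        refine Set.mem_iInter₂.2 (fun t ht => ?_)
        rw [Finset.mem_Icc] at ht
        exact hω t ht.1
      have heq := groupFactor hind hFmeas
        (fun t : ℕ => ({Sum.inr (Sum.inl t)} : Finset (Sym2 (Fin n) ⊕ ℕ ⊕ Fin n)))
        (fun t => sel t ⁻¹' {v}ᶜ)
        (fun t t' htt' => by
          rw [Finset.disjoint_singleton]
          intro hc
          exact htt' (Sum.inl.inj (Sum.inr.inj hc)))
        (fun t => grpEv_single (f := sigFunG n E sel X) (Sum.inr (Sum.inl t))
          (show Set (sigTypeG n (Sum.inr (Sum.inl t))) from {x | x ≠ v}) trivial)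
        (Finset.Icc 1 m)
      calc μ {ω | ∀ t, 1 ≤ t → sel t ω ≠ v} ≤ μ (⋂ t ∈ Finset.Icc 1 m, sel t ⁻¹' {v}ᶜ) :=
            measure_mono hsub
        _ = ∏ t ∈ Finset.Icc 1 m, μ (sel t ⁻¹' {v}ᶜ) := heq
        _ = r ^ m := by
            rw [Finset.prod_congr rfl (fun t ht => hselc t (Finset.mem_Icc.1 ht).1 v),
              Finset.prod_const, Nat.card_Icc]
            congr 1
    have htend := ENNReal.tendsto_pow_atTop_nhds_zero_of_lt_one hrlt
    exact le_antisymm (ge_of_tendsto' htend hbound) zero_le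
  have hmeasAS : MeasurableSet {ω | ∀ v : Fin n, ∃ t, 1 ≤ t ∧ sel t ω = v} := by
    have : {ω | ∀ v : Fin n, ∃ t, 1 ≤ t ∧ sel t ω = v}
        = ⋂ v : Fin n, ⋃ t : ℕ, ⋃ (_ : 1 ≤ t), sel t ⁻¹' {v} := by
      ext ω; simp
    rw [this]
    exact MeasurableSet.iInter (fun v => MeasurableSet.iUnion (fun t =>
      MeasurableSet.iUnion (fun _ => (hselmeas t) trivial)))
  have hcompl : μ ({ω | ∀ v : Fin n, ∃ t, 1 ≤ t ∧ sel t ω = v}ᶜ) = 0 := by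
    have hsub : {ω | ∀ v : Fin n, ∃ t, 1 ≤ t ∧ sel t ω = v}ᶜ
        ⊆ ⋃ v : Fin n, {ω | ∀ t, 1 ≤ t → sel t ω ≠ v} := by
      intro ω hω
      simp only [Set.mem_compl_iff, Set.mem_setOf_eq, not_forall, not_exists] at hω
      obtain ⟨v, hv⟩ := hω
      refine Set.mem_iUnion.2 ⟨v, fun t ht hc => ?_⟩
      exact (not_and.1 (hv t)) ht hc
    refine le_antisymm (le_trans (measure_mono hsub) ?_) zero_le
    rw [measure_iUnion_null (fun v => hNv v)]
  have := measure_compl hmeasAS (measure_ne_top μ _)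
  rw [hcompl, measure_univ] at this
  have hle := prob_le_one (μ := μ) (s := {ω | ∀ v : Fin n, ∃ t, 1 ≤ t ∧ sel t ω = v})
  have : (1:ℝ≥0∞) ≤ μ {ω | ∀ v : Fin n, ∃ t, 1 ≤ t ∧ sel t ω = v} := by
    rw [← tsub_eq_zero_iff_le]
    exact this.symm
  exact le_antisymm hle this

lemma main_bound (hn : 1 ≤ n) (hp0 : 0 < p) (hp1 : p ≤ 1)
    (hEmeas : ∀ e, Measurable (E e)) (hselmeas : ∀ t, Measurable (sel t))
    (hXmeas : ∀ v, Measurable (X v))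
    (hind : ProbabilityTheory.iIndepFun (m := sigTypeGMeasurable n) (sigFunG n E sel X) μ)
    (hE : ∀ e : Sym2 (Fin n), ¬ e.IsDiag → μ {ω | E e ω = true} = ENNReal.ofReal p)
    (hunif : ∀ t, 1 ≤ t → ∀ x : Fin n, μ {ω | sel t ω = x} = (n : ℝ≥0∞)⁻¹)
    (b : Bool) (x : ℝ) (hx0 : 0 ≤ x)
    (hXb : ∀ v, μ (X v ⁻¹' {b}) = ENNReal.ofReal x) :
    ENNReal.ofReal (x * p ^ ((1:ℝ)/p)) ≤
      μ {ω | ∃ T, ∀ t, T ≤ t → ∀ v,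
        majDynG n (fun u u' => decide (u ≠ u') && E s(u, u') ω)
          (fun v' => X v' ω) (fun i => sel i ω) t v = some b} := by
  classical
  set Target := {ω | ∃ T, ∀ t, T ≤ t → ∀ v,
    majDynG n (fun u u' => decide (u ≠ u') && E s(u, u') ω)
      (fun v' => X v' ω) (fun i => sel i ω) t v = some b} with hTgt
  set JC := {j : (T : ℕ) × (Fin T → Fin n) // CondD n j} with hJC
  have hTpos : ∀ j : JC, 0 < j.1.1 := by
    rintro ⟨⟨T, σ⟩, hcond⟩
    obtain ⟨t, -⟩ := hcond.1 ⟨0, hn⟩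
    exact t.pos
  have hdet : ∀ j : JC, (SevD sel j.1.1 j.1.2 ∩ GevD E X b j.1.1 j.1.2) ⊆ Target := by
    rintro j ω ⟨hS, hG⟩
    exact det_incl n E sel X b j.1.1 (hTpos j) j.1.2 j.2.1 ω hS hG
  have hmeasS : ∀ j : JC, MeasurableSet (SevD sel j.1.1 j.1.2) :=
    fun j => Sev_measurable n sel hselmeas _ _
  have hmeasG : ∀ j : JC, MeasurableSet (GevD E X b j.1.1 j.1.2) :=
    fun j => Gev_measurable n E X hEmeas hXmeas b _ _
  have hdisjS : Pairwise (Function.onFun Disjoint (fun j : JC => SevD sel j.1.1 j.1.2)) := by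
    rintro j j' hne
    rw [Function.onFun, Set.disjoint_left]
    intro ω hω hω'
    apply hne
    apply Subtype.ext
    rcases le_total j.1.1 j'.1.1 with hle | hle
    · exact Sev_disj_aux n sel (show CondD n ⟨j.1.1, j.1.2⟩ from j.2)
          (show CondD n ⟨j'.1.1, j'.1.2⟩ from j'.2) hle ω hω hω'
    · exact (Sev_disj_aux n sel (show CondD n ⟨j'.1.1, j'.1.2⟩ from j'.2)
          (show CondD n ⟨j.1.1, j.1.2⟩ from j.2) hle ω hω' hω).symm
  have hdisjSG : Pairwise (Function.onFun Disjoint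
      (fun j : JC => SevD sel j.1.1 j.1.2 ∩ GevD E X b j.1.1 j.1.2)) := by
    intro j j' hne
    exact Set.disjoint_of_subset Set.inter_subset_left Set.inter_subset_left (hdisjS hne)
  have hcover : {ω | ∀ v : Fin n, ∃ t, 1 ≤ t ∧ sel t ω = v}
      ⊆ ⋃ j : JC, SevD sel j.1.1 j.1.2 := by
    intro ω hω
    have hP : ∃ m, ∀ v : Fin n, ∃ t, t < m ∧ sel (t+1) ω = v := by
      choose f hf1 hf2 using hω
      refine ⟨Finset.univ.sup f, fun v => ⟨f v - 1, ?_, ?_⟩⟩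
      · have h1 := hf1 v
        have h2 := Finset.le_sup (Finset.mem_univ v) (f := f)
        omega
      · rw [show f v - 1 + 1 = f v from by have := hf1 v; omega]
        exact hf2 v
    have hdec : DecidablePred (fun m => ∀ v : Fin n, ∃ t, t < m ∧ sel (t+1) ω = v) :=
      fun m => Classical.dec _
    set T := @Nat.find _ hdec hP with hTdef
    have hspec : ∀ v : Fin n, ∃ t, t < T ∧ sel (t+1) ω = v := @Nat.find_spec _ hdec hP
    have hTpos' : 0 < T := by
      rcases Nat.eq_zero_or_pos T with h0 | h
      · obtain ⟨t, ht, -⟩ := hspec ⟨0, hn⟩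
        omega
      · exact h
    set σ : Fin T → Fin n := fun t => sel (t.1+1) ω with hσ
    have hcond : CondD n ⟨T, σ⟩ := by
      constructor
      · intro v
        obtain ⟨t, ht, hv⟩ := hspec v
        exact ⟨⟨t, ht⟩, hv⟩
      · intro hcon
        have hcon' : ∀ v, ∃ t : Fin T, t.1 + 1 < T ∧ σ t = v := hcon
        have hmin := @Nat.find_min _ hdec hP (T - 1) (by omega)
        apply hmin
        intro v
        obtain ⟨t, ht, hv⟩ := hcon' v
        exact ⟨t.1, by omega, hv⟩
    refine Set.mem_iUnion.2 ⟨⟨⟨T, σ⟩, hcond⟩, ?_⟩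
    exact Set.mem_iInter.2 (fun t => rfl)
  have hpieces : ∀ j : JC,
      μ (SevD sel j.1.1 j.1.2) * ENNReal.ofReal (x * p ^ ((1:ℝ)/p))
        ≤ μ (SevD sel j.1.1 j.1.2 ∩ GevD E X b j.1.1 j.1.2) :=
    fun j => mu_piece μ n E sel X hEmeas hselmeas hXmeas hind hp0 hp1 hE b x hx0 hXb
      j.1.1 (hTpos j) j.1.2
  have hAS := mu_AS μ n E sel X hn hEmeas hselmeas hXmeas hind hunif
  calc ENNReal.ofReal (x * p ^ ((1:ℝ)/p))
      = 1 * ENNReal.ofReal (x * p ^ ((1:ℝ)/p)) := (one_mul _).symm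
    _ ≤ μ (⋃ j : JC, SevD sel j.1.1 j.1.2) * ENNReal.ofReal (x * p ^ ((1:ℝ)/p)) := by
        refine mul_le_mul_left ?_ _
        rw [← hAS]
        exact measure_mono hcover
    _ = (∑' j : JC, μ (SevD sel j.1.1 j.1.2)) * ENNReal.ofReal (x * p ^ ((1:ℝ)/p)) := by
        rw [measure_iUnion hdisjS hmeasS]
    _ = ∑' j : JC, μ (SevD sel j.1.1 j.1.2) * ENNReal.ofReal (x * p ^ ((1:ℝ)/p)) :=
        ENNReal.tsum_mul_right.symm
    _ ≤ ∑' j : JC, μ (SevD sel j.1.1 j.1.2 ∩ GevD E X b j.1.1 j.1.2) :=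
        ENNReal.tsum_le_tsum hpieces
    _ = μ (⋃ j : JC, SevD sel j.1.1 j.1.2 ∩ GevD E X b j.1.1 j.1.2) :=
        (measure_iUnion hdisjSG (fun j => (hmeasS j).inter (hmeasG j))).symm
    _ ≤ μ Target := measure_mono (Set.iUnion_subset hdet)
end assembly

/-- Asynchronous majority dynamics on `G(n,p)` for a constant `p ∈ (0,1]` and
`δ ∈ (0,1/2)`: the process terminates in the all-correct consensus with probability at
least `(1/2+δ)p^{1/p} > 0` and in the all-incorrect consensus with probability at least
`(1/2−δ)p^{1/p} > 0`, uniformly in `n`. Edges are i.i.d. `Bernoulli(p)` indicators,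
signals are i.i.d. `Bernoulli(1/2+δ)`, selections are uniform, all independent. -/
theorem stmt18 {Ω : Type*} [MeasurableSpace Ω] (μ : Measure Ω) [IsProbabilityMeasure μ]
    (n : ℕ) (hn : 1 ≤ n) (p : ℝ) (hp0 : 0 < p) (hp1 : p ≤ 1)
    (δ : ℝ) (hδ0 : 0 < δ) (hδ1 : δ < 1/2)
    (E : Sym2 (Fin n) → Ω → Bool) (sel : ℕ → Ω → Fin n) (X : Fin n → Ω → Bool)
    (hEmeas : ∀ e, Measurable (E e)) (hselmeas : ∀ t, Measurable (sel t))
    (hXmeas : ∀ v, Measurable (X v))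
    (hind : ProbabilityTheory.iIndepFun (m := sigTypeGMeasurable n) (sigFunG n E sel X) μ)
    (hE : ∀ e : Sym2 (Fin n), ¬ e.IsDiag → μ {ω | E e ω = true} = ENNReal.ofReal p)
    (hX : ∀ v, μ {ω | X v ω = true} = ENNReal.ofReal (1/2 + δ))
    (hunif : ∀ t, 1 ≤ t → ∀ x : Fin n, μ {ω | sel t ω = x} = (n : ℝ≥0∞)⁻¹) :
    0 < (1/2 + δ) * p ^ ((1:ℝ)/p) ∧
    0 < (1/2 - δ) * p ^ ((1:ℝ)/p) ∧
    ENNReal.ofReal ((1/2 + δ) * p ^ ((1:ℝ)/p)) ≤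
      μ {ω | ∃ T, ∀ t, T ≤ t → ∀ v,
        majDynG n (fun u u' => decide (u ≠ u') && E s(u, u') ω)
          (fun v' => X v' ω) (fun i => sel i ω) t v = some true} ∧
    ENNReal.ofReal ((1/2 - δ) * p ^ ((1:ℝ)/p)) ≤
      μ {ω | ∃ T, ∀ t, T ≤ t → ∀ v,
        majDynG n (fun u u' => decide (u ≠ u') && E s(u, u') ω)
          (fun v' => X v' ω) (fun i => sel i ω) t v = some false} := by
  have hx1 : (0:ℝ) < 1/2 + δ := by linarith
  have hx2 : (0:ℝ) < 1/2 - δ := by linarith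
  have hpp : 0 < p ^ ((1:ℝ)/p) := Real.rpow_pos_of_pos hp0 _
  have hXb1 : ∀ v, μ (X v ⁻¹' {true}) = ENNReal.ofReal (1/2 + δ) := fun v => hX v
  have hXb0 : ∀ v, μ (X v ⁻¹' {false}) = ENNReal.ofReal (1/2 - δ) := by
    intro v
    have h1 : X v ⁻¹' {false} = (X v ⁻¹' {true})ᶜ := by
      ext ω; simp [Bool.not_eq_true]
    rw [h1, measure_compl ((hXmeas v) trivial) (measure_ne_top μ _), measure_univ, hXb1 v,
      ofReal_one_sub (by linarith)]
    congr 1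
    ring
  refine ⟨mul_pos hx1 hpp, mul_pos hx2 hpp, ?_, ?_⟩
  · exact main_bound μ n E sel X hn hp0 hp1 hEmeas hselmeas hXmeas hind hE hunif
      true (1/2 + δ) hx1.le hXb1
  · exact main_bound μ n E sel X hn hp0 hp1 hEmeas hselmeas hXmeas hind hE hunif
      false (1/2 - δ) hx2.le hXb0
end
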